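/- arXiv:0803.3406 — 6 statements merged into one kernel-verified Lean document; each statement's English description precedes it below -/
import Mathlib

section
/- For any 0 ≤ γ ≤ ε ≤ 1 and 0 ≤ h ≤ 1: e^{−hγ}·((1 − γ/ε) + (γ/ε)·e^{hε}) ≤ e^{h²εγ}. -/
lemma exp_aux_stmt7 (x : ℝ) (hx0 : 0 ≤ x) (hx1 : x ≤ 1) :
    Real.exp x ≤ 1 + x + x ^ 2 := by
  have hb := Real.exp_bound (x := x) (by rwa [abs_of_nonneg hx0]) (n := 3) (by norm_num)
  have hsum : ∑ i ∈ Finset.range 3, x ^ i / (Nat.factorial i) = 1 + x + x ^ 2 / 2 := by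
    simp [Finset.sum_range_succ, Nat.factorial]
  rw [hsum, abs_of_nonneg hx0] at hb
  have h2 := (abs_le.mp hb).2
  have hx3 : x ^ 3 ≤ x ^ 2 := by nlinarith
  norm_num [Nat.factorial] at h2
  nlinarith

/-- The one-step moment bound: for `0 ≤ γ ≤ ε ≤ 1` and `0 ≤ h ≤ 1`,
`e^{−hγ}·((1 − γ/ε) + (γ/ε)·e^{hε}) ≤ e^{h²εγ}`. -/
theorem stmt7 (γ ε h : ℝ) (hγ0 : 0 ≤ γ) (hγε : γ ≤ ε) (hε1 : ε ≤ 1)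
    (hh0 : 0 ≤ h) (hh1 : h ≤ 1) :
    Real.exp (-h * γ) * ((1 - γ / ε) + (γ / ε) * Real.exp (h * ε)) ≤
      Real.exp (h ^ 2 * ε * γ) := by
  rcases eq_or_lt_of_le (hγ0.trans hγε) with hε0 | hε0
  · have hγ : γ = 0 := le_antisymm (hγε.trans hε0.ge) hγ0
    simp [hγ, ← hε0]
  · set p := γ / ε with hp
    have hp0 : 0 ≤ p := div_nonneg hγ0 hε0.le
    have hp1 : p ≤ 1 := (div_le_one hε0).mpr hγε
    have hγeq : γ = p * ε := (div_mul_cancel₀ γ hε0.ne').symm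
    set x := h * ε with hx
    have hx0 : 0 ≤ x := mul_nonneg hh0 hε0.le
    have hx1 : x ≤ 1 := by nlinarith
    have step1 : 1 - p + p * Real.exp x ≤ Real.exp (p * (Real.exp x - 1)) := by
      have := Real.add_one_le_exp (p * (Real.exp x - 1))
      linarith
    have hLHS : Real.exp (-h * γ) * ((1 - p) + p * Real.exp x) ≤
        Real.exp (-h * γ) * Real.exp (p * (Real.exp x - 1)) := by
      apply mul_le_mul_of_nonneg_left step1 (Real.exp_nonneg _)
    rw [← Real.exp_add] at hLHS
    refine hLHS.trans (Real.exp_le_exp.mpr ?_)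
    have hexp : Real.exp x ≤ 1 + x + x ^ 2 := exp_aux_stmt7 x hx0 hx1
    have key : p * (Real.exp x - 1 - x) ≤ p * x ^ 2 := by nlinarith
    have : -h * γ = -(p * x) := by rw [hγeq]; ring
    rw [this]
    have : h ^ 2 * ε * γ = p * x ^ 2 := by rw [hγeq]; ring
    rw [this]
    nlinarith
end

section
/- Let S be a finite nonempty set, w : S → ℝ_{>0} a weight function, and let X be the S-valued random variable with Pr(X = x) = w(x)/w(S) where w(S) = Σ_{x∈S} w(x). If the Shannon entropy satisfies H(X) ≥ log|S| − K for a constant K, then setting C with log C = 4(K + log 3), w̄ = w(S)/|S|, a = w̄/C, b = C·w̄, and J = {x ∈ S : a ≤ w(x) ≤ b}, one has w(J) > 0.7·w(S) and |J| ≥ exp(−(K + log 3)/0.7)·|S|. -/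
lemma half_le_mul_log {t : ℝ} (ht : 0 < t) : -(1/2 : ℝ) ≤ t * Real.log t := by
  have h2 : (2:ℝ) ≤ Real.exp 1 := by
    have := Real.exp_one_gt_d9; linarith
  have h := Real.add_one_le_exp (-Real.log t - 1)
  have he : Real.exp (-Real.log t - 1) = t⁻¹ / Real.exp 1 := by
    rw [Real.exp_sub, Real.exp_neg, Real.exp_log ht]
  rw [he] at h
  have h3 : -Real.log t ≤ t⁻¹ / 2 := by
    have : t⁻¹ / Real.exp 1 ≤ t⁻¹ / 2 :=
      div_le_div_of_nonneg_left (by positivity) (by norm_num) h2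
    linarith
  have h4 := mul_le_mul_of_nonneg_left h3 ht.le
  have e : t * (t⁻¹ / 2) = 1/2 := by field_simp
  nlinarith

lemma jensen_aux {α : Type*} (T : Finset α) (hT : T.Nonempty) (w : α → ℝ)
    (hw : ∀ x ∈ T, 0 < w x) (v : ℝ) (hv : 0 < v) :
    (∑ x ∈ T, w x) * Real.log ((∑ x ∈ T, w x) / ((T.card : ℝ) * v)) ≤
      ∑ x ∈ T, w x * Real.log (w x / v) := by
  have hc : (0:ℝ) < T.card := by exact_mod_cast Finset.card_pos.mpr hT
  have hj := Real.convexOn_mul_log.map_sum_le (t := T) (w := fun _ => (T.card:ℝ)⁻¹)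
    (p := fun x => w x / v) (fun i _ => by positivity)
    (by rw [Finset.sum_const, nsmul_eq_mul]; field_simp)
    (fun i hi => Set.mem_Ici.mpr (by have := hw i hi; positivity))
  simp only [smul_eq_mul] at hj
  have hu : ∑ x ∈ T, (T.card:ℝ)⁻¹ * (w x / v) = (∑ x ∈ T, w x) / ((T.card:ℝ) * v) := by
    rw [← Finset.mul_sum, ← Finset.sum_div]
    field_simp
  rw [hu] at hj
  have h2 : ∑ x ∈ T, (T.card:ℝ)⁻¹ * (w x / v * Real.log (w x / v))
      = (T.card:ℝ)⁻¹ * v⁻¹ * ∑ x ∈ T, w x * Real.log (w x / v) := by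
    rw [Finset.mul_sum]
    refine Finset.sum_congr rfl fun x hx => ?_
    field_simp
  rw [h2] at hj
  have h3 := mul_le_mul_of_nonneg_left hj (le_of_lt (by positivity : (0:ℝ) < (T.card:ℝ) * v))
  have e1 : ((T.card:ℝ) * v) * ((∑ x ∈ T, w x) / ((T.card:ℝ) * v)
      * Real.log ((∑ x ∈ T, w x) / ((T.card:ℝ) * v)))
      = (∑ x ∈ T, w x) * Real.log ((∑ x ∈ T, w x) / ((T.card:ℝ) * v)) := by
    field_simp
  have e2 : ((T.card:ℝ) * v) * ((T.card:ℝ)⁻¹ * v⁻¹ * ∑ x ∈ T, w x * Real.log (w x / v))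
      = ∑ x ∈ T, w x * Real.log (w x / v) := by
    field_simp
  rw [e1, e2] at h3
  exact h3
/-- The (natural-log) Shannon entropy of the random element of `S` chosen with
probability proportional to the weight `w`. -/
noncomputable def wEntropy {α : Type*} (S : Finset α) (w : α → ℝ) : ℝ :=
  ∑ x ∈ S, -((w x / ∑ y ∈ S, w y) * Real.log (w x / ∑ y ∈ S, w y))

set_option maxHeartbeats 1000000 in
open Classical in
/-- If the entropy of the `w`-weighted distribution on `S` is at least `log|S| − K`, then
with `C = e^{4(K+log 3)}`, `w̄ = w(S)/|S|`, `a = w̄/C`, `b = C·w̄` and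
`J = {x ∈ S : a ≤ w(x) ≤ b}`, one has `w(J) > 0.7·w(S)` and
`|J| ≥ e^{−(K+log 3)/0.7}·|S|`. -/
theorem stmt8 {α : Type*} (S : Finset α) (hS : S.Nonempty) (w : α → ℝ)
    (hw : ∀ x ∈ S, 0 < w x) (K : ℝ)
    (hH : Real.log (S.card : ℝ) - K ≤ wEntropy S w) :
    ∀ C a b : ℝ, C = Real.exp (4 * (K + Real.log 3)) →
      a = (∑ y ∈ S, w y) / (S.card : ℝ) / C →
      b = C * ((∑ y ∈ S, w y) / (S.card : ℝ)) →
      ∀ J : Finset α, J = S.filter (fun x => a ≤ w x ∧ w x ≤ b) →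
        0.7 * ∑ y ∈ S, w y < (∑ x ∈ J, w x) ∧
          Real.exp (-(K + Real.log 3) / 0.7) * (S.card : ℝ) ≤ (J.card : ℝ) := by
  intro C a b hC ha hb J hJ
  classical
  have hcard : 0 < S.card := Finset.card_pos.mpr hS
  have hn : (0:ℝ) < (S.card:ℝ) := by exact_mod_cast hcard
  have hW : (0:ℝ) < ∑ y ∈ S, w y := Finset.sum_pos hw hS
  set W : ℝ := ∑ y ∈ S, w y with hWdef
  set n : ℝ := (S.card : ℝ) with hndef
  set v : ℝ := W / n with hvdef
  have hv : 0 < v := div_pos hW hn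
  clear_value W n v
  have hlog3 : (1:ℝ) < Real.log 3 := by
    rw [show (1:ℝ) = Real.log (Real.exp 1) by rw [Real.log_exp]]
    apply Real.log_lt_log (Real.exp_pos 1)
    have := Real.exp_one_lt_d9; linarith
  -- rewrite entropy hypothesis
  have hterm : ∀ x ∈ S, w x * Real.log (w x / v) = w x * Real.log (w x / W) + w x * Real.log n := by
    intro x hx
    have hwx := hw x hx
    have hrw : w x / v = (w x / W) * n := by
      rw [hvdef]; field_simp
    rw [hrw, Real.log_mul (by positivity) (ne_of_gt hn)]; ring
  have hsum : ∑ x ∈ S, w x * Real.log (w x / v) ≤ K * W := by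
    have h1 : ∑ x ∈ S, w x * Real.log (w x / v)
        = (∑ x ∈ S, w x * Real.log (w x / W)) + W * Real.log n := by
      rw [Finset.sum_congr rfl hterm, Finset.sum_add_distrib, ← Finset.sum_mul, ← hWdef]
    have h2 : W * wEntropy S w = -∑ x ∈ S, w x * Real.log (w x / W) := by
      rw [wEntropy, ← hWdef, Finset.mul_sum, ← Finset.sum_neg_distrib]
      refine Finset.sum_congr rfl fun x hx => ?_
      have hWne : W ≠ 0 := ne_of_gt hW
      field_simp
    have h3 := mul_le_mul_of_nonneg_left hH (le_of_lt hW)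
    rw [mul_sub] at h3
    rw [h2] at h3
    -- h3 : W * log n - W * K ≤ -(Σ w log(w/W))
    nlinarith [h1]
  -- Jensen on S gives K ≥ 0
  have hjS := jensen_aux S hS w hw v hv
  have hWnv : W / (n * v) = 1 := by rw [hvdef]; field_simp
  rw [← hWdef, ← hndef, hWnv, Real.log_one, mul_zero] at hjS
  have hK0 : 0 ≤ K := by nlinarith
  have hK' : 0 < K + Real.log 3 := by linarith
  have hC81 : (81:ℝ) ≤ C := by
    rw [hC]
    calc (81:ℝ) = Real.exp (Real.log 81) := (Real.exp_log (by norm_num)).symm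
    _ ≤ Real.exp (4 * (K + Real.log 3)) := by
        apply Real.exp_le_exp.mpr
        have h81 : Real.log 81 = 4 * Real.log 3 := by
          rw [show (81:ℝ) = 3^(4:ℕ) by norm_num, Real.log_pow]; push_cast; ring
        rw [h81]; nlinarith
  have hCpos : (0:ℝ) < C := by linarith
  have hlogC : Real.log C = 4 * (K + Real.log 3) := by rw [hC, Real.log_exp]
  have ha' : a = v / C := by rw [ha]
  have hb' : b = C * v := by rw [hb]
  have hav : a ≤ v := by
    rw [ha']
    calc v / C ≤ v / 1 := div_le_div_of_nonneg_left hv.le one_pos (by linarith)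
    _ = v := div_one v
  have hvb : v ≤ b := by
    rw [hb']
    nlinarith [mul_le_mul_of_nonneg_right hC81 hv.le]
  -- partition
  set L : Finset α := S.filter (fun x => w x < a) with hLdef
  set B : Finset α := S.filter (fun x => b < w x) with hBdef
  clear_value L B
  have hLB : S.filter (fun x => ¬(a ≤ w x ∧ w x ≤ b)) = L ∪ B := by
    ext x
    simp only [Finset.mem_filter, Finset.mem_union, hLdef, hBdef]
    constructor
    · rintro ⟨hx, h⟩
      rw [not_and_or, not_le, not_le] at h
      tauto
    · rintro (⟨hx, h⟩ | ⟨hx, h⟩) <;> exact ⟨hx, by push_neg; intro h'; · linarith⟩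
  have hdisj : Disjoint L B := by
    rw [Finset.disjoint_left]
    intro x hxL hxB
    simp only [hLdef, hBdef, Finset.mem_filter] at hxL hxB
    linarith [hxL.2, hxB.2, hav, hvb]
  have hpart : ∀ f : α → ℝ, ∑ x ∈ S, f x = (∑ x ∈ J, f x) + ((∑ x ∈ L, f x) + ∑ x ∈ B, f x) := by
    intro f
    rw [hJ, ← Finset.sum_filter_add_sum_filter_not S (fun x => a ≤ w x ∧ w x ≤ b) f, hLB,
      Finset.sum_union hdisj]
  -- pointwise lower bound
  have hφlow : ∀ x ∈ S, -(v/2) ≤ w x * Real.log (w x / v) := by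
    intro x hx
    have hwx := hw x hx
    have ht : (0:ℝ) < w x / v := by positivity
    have h1 := half_le_mul_log ht
    have h2 := mul_le_mul_of_nonneg_left h1 hv.le
    have e : v * (w x / v * Real.log (w x / v)) = w x * Real.log (w x / v) := by
      field_simp
    rw [e] at h2
    linarith
  have hsubL : L ⊆ S := by rw [hLdef]; exact Finset.filter_subset _ _
  have hsubB : B ⊆ S := by rw [hBdef]; exact Finset.filter_subset _ _
  have hsubJ : J ⊆ S := by rw [hJ]; exact Finset.filter_subset _ _
  have hcardle : ∀ T : Finset α, T ⊆ S → (T.card : ℝ) ≤ n := by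
    intro T hT
    rw [hndef]; exact_mod_cast Finset.card_le_card hT
  have hTlow : ∀ T : Finset α, T ⊆ S → -(W/2) ≤ ∑ x ∈ T, w x * Real.log (w x / v) := by
    intro T hT
    have h1 : T.card • (-(v/2)) ≤ ∑ x ∈ T, w x * Real.log (w x / v) :=
      Finset.card_nsmul_le_sum T _ _ (fun x hx => hφlow x (hT hx))
    rw [nsmul_eq_mul] at h1
    have h2 : -(W/2) ≤ (T.card:ℝ) * (-(v/2)) := by
      have h3 := hcardle T hT
      have : n * v = W := by rw [hvdef]; field_simp
      nlinarith
    linarith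
  -- B bounds
  have hBφ : ∀ x ∈ B, (4 * (K + Real.log 3)) * w x ≤ w x * Real.log (w x / v) := by
    intro x hx
    simp only [hBdef, Finset.mem_filter] at hx
    have hwx := hw x hx.1
    have hCx : C ≤ w x / v := by
      rw [le_div_iff₀ hv]
      rw [hb'] at hx
      linarith [hx.2]
    have hlog : 4 * (K + Real.log 3) ≤ Real.log (w x / v) := by
      rw [← hlogC]
      exact Real.log_le_log hCpos hCx
    have := mul_le_mul_of_nonneg_left hlog hwx.le
    linarith
  have hBlow : (4 * (K + Real.log 3)) * ∑ x ∈ B, w x ≤ ∑ x ∈ B, w x * Real.log (w x / v) := by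
    rw [Finset.mul_sum]
    exact Finset.sum_le_sum hBφ
  have hBpos : 0 ≤ ∑ x ∈ B, w x := Finset.sum_nonneg fun x hx => (hw x (hsubB hx)).le
  have hBφpos : 0 ≤ ∑ x ∈ B, w x * Real.log (w x / v) := by
    have h0 : 0 ≤ (4 * (K + Real.log 3)) * ∑ x ∈ B, w x :=
      mul_nonneg (by linarith) hBpos
    linarith
  -- L weight bound
  have hLw : ∑ x ∈ L, w x ≤ W / 81 := by
    have h1 : ∑ x ∈ L, w x ≤ L.card • a := by
      apply Finset.sum_le_card_nsmul
      intro x hx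
      simp only [hLdef, Finset.mem_filter] at hx
      linarith [hx.2]
    rw [nsmul_eq_mul] at h1
    have h2 : (L.card : ℝ) * a ≤ n * a := by
      have hann : 0 ≤ a := by rw [ha']; positivity
      exact mul_le_mul_of_nonneg_right (hcardle L hsubL) hann
    have h3 : n * a = W / C := by
      rw [ha', hvdef]; field_simp
    have h4 : W / C ≤ W / 81 := div_le_div_of_nonneg_left hW.le (by norm_num) hC81
    linarith
  -- claim 1
  have hsplitφ := hpart (fun x => w x * Real.log (w x / v))
  have hsplitw := hpart w
  have hJφlow := hTlow J hsubJ
  have hLφlow := hTlow L hsubL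
  have hBw : ∑ x ∈ B, w x < W / 4 := by
    have key : (4 * (K + Real.log 3)) * ∑ x ∈ B, w x ≤ (K + 1) * W := by
      linarith [hsplitφ, hsum, hJφlow, hLφlow, hBlow]
    have h5 : (K + 1) * W < (K + Real.log 3) * W :=
      mul_lt_mul_of_pos_right (by linarith) hW
    have h6 : (4 * (K + Real.log 3)) * ∑ x ∈ B, w x < (4 * (K + Real.log 3)) * (W / 4) := by
      linarith
    exact lt_of_mul_lt_mul_left h6 (by positivity)
  have claim1 : 0.7 * W < ∑ x ∈ J, w x := by
    linarith [hLw, hBw, hsplitw, hW]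
  refine ⟨claim1, ?_⟩
  clear hH hterm hLB hdisj hpart hφlow hTlow hcardle hBφ hBlow hsplitw hJφlow hLw hBw hBpos hjS hWnv
  -- claim 2
  have hJne : J.Nonempty := by
    apply Finset.nonempty_of_ne_empty
    intro h
    rw [h, Finset.sum_empty] at claim1
    linarith
  have hcJ : (0:ℝ) < (J.card : ℝ) := by exact_mod_cast Finset.card_pos.mpr hJne
  have hjJ := jensen_aux J hJne w (fun x hx => hw x (hsubJ hx)) v hv
  obtain ⟨wJ, hwJdef⟩ : ∃ t : ℝ, t = ∑ x ∈ J, w x := ⟨_, rfl⟩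
  rw [← hwJdef] at claim1 hjJ
  have hwJpos : 0 < wJ := by linarith only [claim1, hW]
  have hJφhigh : ∑ x ∈ J, w x * Real.log (w x / v) ≤ (K + 1/2) * W := by
    linarith only [hsplitφ, hLφlow, hBφpos, hsum]
  have hkey : wJ * Real.log (wJ / ((J.card:ℝ) * v)) ≤ (K + 1/2) * W := le_trans hjJ hJφhigh
  have hX : Real.log (wJ / ((J.card:ℝ) * v)) ≤ (K + 1/2) / 0.7 := by
    set X := Real.log (wJ / ((J.card:ℝ) * v)) with hXdef
    rcases le_or_gt X 0 with h | h
    · have : (0:ℝ) ≤ (K + 1/2) / 0.7 := by positivity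
      linarith
    · have h1 : 0.7 * W * X ≤ wJ * X := by
        have := mul_le_mul_of_nonneg_right claim1.le h.le
        linarith
      have h2 : 0.7 * X * W ≤ (K + 1/2) * W := by nlinarith [h1, hkey]
      have h3 : 0.7 * X ≤ K + 1/2 := le_of_mul_le_mul_right (by linarith) hW
      rw [le_div_iff₀ (by norm_num : (0:ℝ) < 0.7)]
      linarith
  have hsplitlog : Real.log (wJ / ((J.card:ℝ) * v))
      = Real.log (wJ / W) + Real.log (n / (J.card:ℝ)) := by
    have e : wJ / ((J.card:ℝ) * v) = (wJ / W) * (n / (J.card:ℝ)) := by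
      rw [hvdef]; field_simp
    rw [e, Real.log_mul (by positivity) (by positivity)]
  have hq : Real.log (7/10 : ℝ) ≤ Real.log (wJ / W) := by
    apply Real.log_le_log (by norm_num)
    rw [le_div_iff₀ hW]
    linarith
  have hlog710 : -(3/7 : ℝ) ≤ Real.log (7/10 : ℝ) := by
    have h1 : Real.log (10/7 : ℝ) ≤ 3/7 := by
      have := Real.log_le_sub_one_of_pos (show (0:ℝ) < 10/7 by norm_num)
      linarith
    have h2 : Real.log (7/10 : ℝ) = -Real.log (10/7 : ℝ) := by
      rw [show (7/10:ℝ) = (10/7:ℝ)⁻¹ by norm_num, Real.log_inv]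
    linarith
  have hfinal : Real.log (n / (J.card:ℝ)) ≤ (K + Real.log 3) / 0.7 := by
    rw [hsplitlog] at hX
    have : Real.log (n / (J.card:ℝ)) ≤ (K + 1/2) / 0.7 + 3/7 := by linarith
    have hnum : (K + 1/2) / 0.7 + 3/7 ≤ (K + Real.log 3) / 0.7 := by
      have e : (K + 1/2) / 0.7 + 3/7 = (K + 4/5) / 0.7 := by ring
      rw [e, div_le_div_iff₀ (by norm_num) (by norm_num)]
      nlinarith [hlog3]
    linarith
  have hexp : n / (J.card:ℝ) ≤ Real.exp ((K + Real.log 3) / 0.7) := by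
    rw [← Real.exp_log (show (0:ℝ) < n / (J.card:ℝ) by positivity)]
    exact Real.exp_le_exp.mpr hfinal
  have hmul : n ≤ Real.exp ((K + Real.log 3) / 0.7) * (J.card:ℝ) := by
    rw [div_le_iff₀ hcJ] at hexp
    exact hexp
  rw [neg_div, Real.exp_neg, inv_mul_le_iff₀ (Real.exp_pos _)]
  exact hmul
end

section
/- Let S be a finite set, w : S → ℝ_{≥0}, X the random element with Pr(X=x) proportional to w(x), and U ⊆ S a subset with |U| ≤ |S|/C for some C > 1. If H(X) ≥ log|S| − K, then w(U)/w(S) ≤ (K + log 3)/log C, provided log C > K + log 3. -/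
open Real Finset

section

variable {α : Type*}

lemma sum_negMulLog_le (T : Finset α) (p : α → ℝ) (hp : ∀ x ∈ T, 0 ≤ p x) :
    ∑ x ∈ T, negMulLog (p x) ≤
      negMulLog (∑ x ∈ T, p x) + (∑ x ∈ T, p x) * log #T := by
  rcases T.eq_empty_or_nonempty with rfl | hT
  · simp
  have hn : (0 : ℝ) < #T := by exact_mod_cast hT.card_pos
  have jensen := concaveOn_negMulLog.le_map_sum (t := T) (w := fun _ => (#T : ℝ)⁻¹) (p := p)
    (fun _ _ => by positivity) (by simp [hn.ne']) (fun x hx => Set.mem_Ici.mpr (hp x hx))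
  simp only [smul_eq_mul, ← mul_sum] at jensen
  calc ∑ x ∈ T, negMulLog (p x)
      ≤ #T * negMulLog ((#T : ℝ)⁻¹ * ∑ x ∈ T, p x) := by
        rwa [← inv_mul_le_iff₀ hn]
    _ = negMulLog (∑ x ∈ T, p x) + (∑ x ∈ T, p x) * log #T := by
        rw [mul_comm, negMulLog_mul, negMulLog, log_inv]
        field_simp
        ring

lemma sum_negMulLog_le_of_card_le (T : Finset α) (p : α → ℝ) (hp : ∀ x ∈ T, 0 ≤ p x)
    {N : ℝ} (hN : (#T : ℝ) ≤ N) :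
    ∑ x ∈ T, negMulLog (p x) ≤
      negMulLog (∑ x ∈ T, p x) + (∑ x ∈ T, p x) * log N := by
  rcases T.eq_empty_or_nonempty with rfl | hT
  · simp
  have hlog : log #T ≤ log N := log_le_log (by exact_mod_cast hT.card_pos) hN
  have := mul_le_mul_of_nonneg_left hlog (sum_nonneg hp)
  linarith [sum_negMulLog_le T p hp]

theorem mass_mul_log_le {S U : Finset α} (hU : U ⊆ S) (p : α → ℝ) (hp : ∀ x ∈ S, 0 ≤ p x)
    (hp1 : ∑ x ∈ S, p x = 1) {C : ℝ} (hC : 0 < C) (hUcard : (#U : ℝ) ≤ #S / C) :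
    (∑ x ∈ U, p x) * log C ≤ log 2 + log #S - ∑ x ∈ S, negMulLog (p x) := by
  classical
  set q := ∑ x ∈ U, p x
  have hS : (#S : ℝ) ≠ 0 := by
    rintro h
    simp [Finset.card_eq_zero.mp (by exact_mod_cast h)] at hp1
  have hrest : ∑ x ∈ S \ U, p x = 1 - q := by
    rw [← hp1, ← sum_sdiff hU]; ring
  have hsplit := sum_sdiff hU (f := fun x => negMulLog (p x))
  have hUblock := sum_negMulLog_le_of_card_le U p (fun x hx => hp x (hU hx)) hUcard
  have hrestblock := sum_negMulLog_le_of_card_le (S \ U) p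
    (fun x hx => hp x (mem_sdiff.mp hx).1) (N := #S) (by exact_mod_cast card_le_card sdiff_subset)
  rw [log_div hS hC.ne'] at hUblock
  rw [hrest] at hrestblock
  have hbin : negMulLog q + negMulLog (1 - q) ≤ log 2 := by
    rw [← binEntropy_eq_negMulLog_add_negMulLog_one_sub]
    exact binEntropy_le_log_two
  linarith

lemma wEntropy_eq_sum_negMulLog (S : Finset α) (w : α → ℝ) :
    wEntropy S w = ∑ x ∈ S, negMulLog (w x / ∑ y ∈ S, w y) := by
  simp only [wEntropy, negMulLog, neg_mul]

end

theorem stmt9_general {α : Type*} (S : Finset α) (w : α → ℝ)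
    (hw : ∀ x ∈ S, 0 ≤ w x) (hW : 0 < ∑ y ∈ S, w y)
    (U : Finset α) (hU : U ⊆ S) (C K : ℝ) (hC : 1 < C)
    (hUcard : (U.card : ℝ) ≤ (S.card : ℝ) / C)
    (hH : Real.log (S.card : ℝ) - K ≤ wEntropy S w) :
    (∑ x ∈ U, w x) / (∑ y ∈ S, w y) ≤ (K + Real.log 3) / Real.log C := by
  set W := ∑ y ∈ S, w y
  have hmass := mass_mul_log_le hU (fun x => w x / W) (fun x hx => div_nonneg (hw x hx) hW.le)
    (by rw [← sum_div, div_self hW.ne']) (zero_lt_one.trans hC) hUcard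
  rw [← sum_div, ← wEntropy_eq_sum_negMulLog] at hmass
  have hlog : log 2 ≤ log 3 := log_le_log (by norm_num) (by norm_num)
  rw [le_div_iff₀ (log_pos hC)]
  linarith

/-- If `H(X) ≥ log|S| − K` for the `w`-weighted random element `X` of `S`, and
`U ⊆ S` with `|U| ≤ |S|/C`, `C > 1`, `log C > K + log 3`, then
`w(U)/w(S) ≤ (K + log 3)/log C`. -/
theorem stmt9 {α : Type*} (S : Finset α) (hS : S.Nonempty) (w : α → ℝ)
    (hw : ∀ x ∈ S, 0 ≤ w x) (hW : 0 < ∑ y ∈ S, w y)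
    (U : Finset α) (hU : U ⊆ S) (C K : ℝ) (hC : 1 < C)
    (hUcard : (U.card : ℝ) ≤ (S.card : ℝ) / C)
    (hH : Real.log (S.card : ℝ) - K ≤ wEntropy S w)
    (hCK : K + Real.log 3 < Real.log C) :
    (∑ x ∈ U, w x) / (∑ y ∈ S, w y) ≤ (K + Real.log 3) / Real.log C :=
  stmt9_general S w hw hW U hU C K hC hUcard hH
end

section
/- (Shearer-type bound for H-factors) For any graph G on n vertices with at least one H-factor, log Φ(G) ≤ (1/v)·Σ_{y ∈ V(G)} h(y,G), where Φ(G) is the number of H-factors of G and h(y,G) is the entropy of the copy of H containing y in a uniformly random H-factor of G. -/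
open SimpleGraph

def IsHFactor {v n : ℕ} (H : SimpleGraph (Fin v)) (G : SimpleGraph (Fin n))
    (F : Finset G.Subgraph) : Prop :=
  F.card = n / v ∧ (∀ K ∈ F, Nonempty (K.coe ≃g H)) ∧
    ∀ x : Fin n, ∃! K : G.Subgraph, K ∈ F ∧ x ∈ K.verts

/-- `Φ(G)`: the number of `H`-factors of `G`. -/
noncomputable def numHFactors {v n : ℕ} (H : SimpleGraph (Fin v))
    (G : SimpleGraph (Fin n)) : ℕ :=
  {F : Finset G.Subgraph | IsHFactor H G F}.ncard

/-- The number of `H`-factors of `G` containing the copy `K`. -/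
noncomputable def copyWeight {v n : ℕ} (H : SimpleGraph (Fin v))
    (G : SimpleGraph (Fin n)) (K : G.Subgraph) : ℕ :=
  {F : Finset G.Subgraph | IsHFactor H G F ∧ K ∈ F}.ncard

open Classical in
/-- `h(y,G)`: the entropy of the copy of `H` containing `y` in a uniformly random
`H`-factor of `G`; the copy `K ∋ y` occurs with probability `copyWeight K / Φ(G)`. -/
noncomputable def hent {v n : ℕ} (H : SimpleGraph (Fin v))
    (G : SimpleGraph (Fin n)) (y : Fin n) : ℝ :=
  ∑ᶠ K : G.Subgraph,
    if y ∈ K.verts then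
      -((copyWeight H G K : ℝ) / (numHFactors H G : ℝ) *
        Real.log ((copyWeight H G K : ℝ) / (numHFactors H G : ℝ)))
    else 0

/-!
Let `q K` be the probability that the copy `K` of `H` lies in a uniformly random `H`-factor.
For every vertex `y` the copies through `y` have total probability one, and splitting off the
copy through a fixed vertex shows by induction that `∑ ∏_{K ∈ F} q K ≤ 1`, the sum running over
all partitions `F` of the vertex set into copies. By `log x ≤ x - 1` (Gibbs' inequality) this
gives `log Φ ≤ 𝔼[-log ∏_{K ∈ F} q K] = ∑_K -q K log q K` for a uniformly random factor `F`,
and every copy `K` with `q K ≠ 0` has exactly `v` vertices, so the right-hand side is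
`(1/v) ∑_y h(y,G)`.
-/

open SimpleGraph Finset Real
open scoped Classical

section ExactCover

variable {α V : Type*} [DecidableEq V]

def IsExactCover (blocks : α → Finset V) (S : Finset V) (P : Finset α) : Prop :=
  (∀ K ∈ P, (blocks K).Nonempty) ∧ (P : Set α).PairwiseDisjoint blocks ∧ P.biUnion blocks = S

variable {blocks : α → Finset V} {S : Finset V} {P : Finset α}

lemma IsExactCover.eq_empty_of_empty (h : IsExactCover blocks ∅ P) : P = ∅ := by
  refine eq_empty_of_forall_notMem fun K hK => ?_
  obtain ⟨x, hx⟩ := h.1 K hK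
  have : x ∈ P.biUnion blocks := mem_biUnion.2 ⟨K, hK, hx⟩
  simp [h.2.2] at this

lemma IsExactCover.erase (h : IsExactCover blocks S P) {K : α} (hK : K ∈ P) :
    IsExactCover blocks (S \ blocks K) (P.erase K) := by
  refine ⟨fun K' hK' => h.1 K' (mem_of_mem_erase hK'), h.2.1.subset (by simp), ?_⟩
  ext x
  simp only [← h.2.2, mem_biUnion, mem_erase, mem_sdiff]
  constructor
  · rintro ⟨K', ⟨hne, hK'⟩, hx⟩
    exact ⟨⟨K', hK', hx⟩, fun hxK => disjoint_left.1 (h.2.1 hK' hK hne) hx hxK⟩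
  · rintro ⟨⟨K', hK', hx⟩, hxK⟩
    exact ⟨K', ⟨by rintro rfl; exact hxK hx, hK'⟩, hx⟩

lemma IsExactCover.card_filter_mem (h : IsExactCover blocks S P) {y : V} (hy : y ∈ S) :
    #{K ∈ P | y ∈ blocks K} = 1 := by
  refine le_antisymm (card_le_one.2 fun K hK K' hK' => ?_) (card_pos.2 ?_)
  · simp only [mem_filter] at hK hK'
    by_contra hne
    exact disjoint_left.1 (h.2.1 hK.1 hK'.1 hne) hK.2 hK'.2
  · obtain ⟨K, hK, hyK⟩ := mem_biUnion.1 (h.2.2 ▸ hy)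
    exact ⟨K, mem_filter.2 ⟨hK, hyK⟩⟩

variable [Fintype α] {q : α → ℝ}

lemma sum_prod_isExactCover_mem_le (hq : ∀ K, 0 ≤ q K) (K : α) :
    ∑ P with IsExactCover blocks S P ∧ K ∈ P, ∏ K' ∈ P, q K' ≤
      q K * ∑ P with IsExactCover blocks (S \ blocks K) P, ∏ K' ∈ P, q K' := by
  set covers : Finset (Finset α) := {P | IsExactCover blocks S P ∧ K ∈ P}
  have hinj : Set.InjOn (fun P : Finset α => P.erase K) covers := fun P hP P' hP' hPP' => by
    rw [← insert_erase (mem_filter.1 hP).2.2, ← insert_erase (mem_filter.1 hP').2.2]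
    exact congrArg _ hPP'
  calc ∑ P ∈ covers, ∏ K' ∈ P, q K'
      = ∑ P ∈ covers, q K * ∏ K' ∈ P.erase K, q K' :=
        sum_congr rfl fun P hP => (mul_prod_erase _ _ (mem_filter.1 hP).2.2).symm
    _ = q K * ∑ P ∈ covers.image (·.erase K), ∏ K' ∈ P, q K' := by
        rw [sum_image hinj, mul_sum]
    _ ≤ q K * ∑ P with IsExactCover blocks (S \ blocks K) P, ∏ K' ∈ P, q K' := by
        refine mul_le_mul_of_nonneg_left (sum_le_sum_of_subset_of_nonneg ?_
          fun P _ _ => prod_nonneg fun K' _ => hq K') (hq K)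
        intro P' hP'
        obtain ⟨P, hP, rfl⟩ := mem_image.1 hP'
        obtain ⟨hcover, hK⟩ := (mem_filter.1 hP).2
        exact mem_filter.2 ⟨mem_univ _, hcover.erase hK⟩

theorem sum_prod_isExactCover_le_one (hq : ∀ K, 0 ≤ q K)
    (hq_sum : ∀ y, ∑ K with y ∈ blocks K, q K ≤ 1) (S : Finset V) :
    ∑ P with IsExactCover blocks S P, ∏ K ∈ P, q K ≤ 1 := by
  induction S using Finset.strongInduction with
  | H S ih =>
  rcases S.eq_empty_or_nonempty with rfl | ⟨y, hy⟩
  · calc ∑ P with IsExactCover blocks ∅ P, ∏ K ∈ P, q K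
        ≤ ∑ P ∈ {∅}, ∏ K ∈ P, q K :=
          sum_le_sum_of_subset_of_nonneg
            (fun P hP => mem_singleton.2 (mem_filter.1 hP).2.eq_empty_of_empty)
            fun P _ _ => prod_nonneg fun K _ => hq K
      _ = 1 := by simp
  have hsplit : ∀ P ∈ ({P | IsExactCover blocks S P} : Finset (Finset α)),
      ∏ K ∈ P, q K = ∑ K ∈ P with y ∈ blocks K, ∏ K' ∈ P, q K' := fun P hP => by
    rw [sum_const, (mem_filter.1 hP).2.card_filter_mem hy, one_smul]
  calc ∑ P with IsExactCover blocks S P, ∏ K ∈ P, q K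
      = ∑ K with y ∈ blocks K, ∑ P with IsExactCover blocks S P ∧ K ∈ P, ∏ K' ∈ P, q K' := by
        rw [sum_congr rfl hsplit]
        exact sum_comm' fun P K => by simp only [mem_filter, mem_univ, true_and]; tauto
    _ ≤ ∑ K with y ∈ blocks K,
          q K * ∑ P with IsExactCover blocks (S \ blocks K) P, ∏ K' ∈ P, q K' :=
        sum_le_sum fun K _ => sum_prod_isExactCover_mem_le hq K
    _ ≤ ∑ K with y ∈ blocks K, q K := by
        refine sum_le_sum fun K hK => mul_le_of_le_one_right (hq K) (ih _ ?_)
        exact (ssubset_iff_of_subset sdiff_subset).2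
          ⟨y, hy, fun hy' => (mem_sdiff.1 hy').2 (mem_filter.1 hK).2⟩
    _ ≤ 1 := hq_sum y

end ExactCover

theorem Finset.sum_sum_eq_sum_card_smul {α M : Type*} [Fintype α] [AddCommMonoid M]
    (Ω : Finset (Finset α)) (g : α → M) :
    ∑ F ∈ Ω, ∑ K ∈ F, g K = ∑ K, #{F ∈ Ω | K ∈ F} • g K := by
  rw [sum_comm' (t' := univ) (s' := fun K => {F ∈ Ω | K ∈ F}) fun F K => by simp]
  exact sum_congr rfl fun K _ => sum_const _

theorem card_mul_log_card_le_sum_neg_log {ι : Type*} (s : Finset ι) (r : ι → ℝ)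
    (hr : ∀ i ∈ s, 0 < r i) (hr_sum : ∑ i ∈ s, r i ≤ 1) :
    #s * log #s ≤ ∑ i ∈ s, -log (r i) := by
  rcases s.eq_empty_or_nonempty with rfl | hs
  · simp
  have hcard : (0 : ℝ) < #s := by exact_mod_cast hs.card_pos
  have hgibbs : ∀ i ∈ s, log #s + log (r i) ≤ #s * r i - 1 := fun i hi => by
    rw [← log_mul hcard.ne' (hr i hi).ne']
    exact log_le_sub_one_of_pos (mul_pos hcard (hr i hi))
  have hsum := sum_le_sum hgibbs
  rw [sum_add_distrib, sum_sub_distrib, ← mul_sum, sum_const, sum_const, nsmul_eq_mul,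
    nsmul_eq_mul, mul_one] at hsum
  have hmass := mul_le_mul_of_nonneg_left hr_sum hcard.le
  rw [sum_neg_distrib]
  linarith

section HFactor

variable {v n : ℕ} {H : SimpleGraph (Fin v)} {G : SimpleGraph (Fin n)}

noncomputable def hFactors (H : SimpleGraph (Fin v)) (G : SimpleGraph (Fin n)) :
    Finset (Finset G.Subgraph) :=
  {F | IsHFactor H G F}

noncomputable def copyProb (H : SimpleGraph (Fin v)) (G : SimpleGraph (Fin n))
    (K : G.Subgraph) : ℝ :=
  copyWeight H G K / numHFactors H G

lemma numHFactors_eq_card : numHFactors H G = #(hFactors H G) := by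
  rw [numHFactors, Set.ncard_eq_toFinset_card']
  congr 1
  ext F
  simp [hFactors]

lemma copyWeight_eq_card (K : G.Subgraph) :
    copyWeight H G K = #{F ∈ hFactors H G | K ∈ F} := by
  rw [copyWeight, Set.ncard_eq_toFinset_card']
  congr 1
  ext F
  simp [hFactors]

lemma IsHFactor.card_verts {F : Finset G.Subgraph} (hF : IsHFactor H G F) {K : G.Subgraph}
    (hK : K ∈ F) : #K.verts.toFinset = v := by
  obtain ⟨e⟩ := hF.2.1 K hK
  simpa using Fintype.card_congr e.toEquiv

lemma IsHFactor.card_filter_mem_verts {F : Finset G.Subgraph} (hF : IsHFactor H G F)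
    (y : Fin n) : #{K ∈ F | y ∈ K.verts} = 1 := by
  obtain ⟨K, hK, huniq⟩ := hF.2.2 y
  exact card_eq_one.2 ⟨K, eq_singleton_iff_unique_mem.2
    ⟨mem_filter.2 hK, fun K' hK' => huniq K' (mem_filter.1 hK')⟩⟩

lemma IsHFactor.isExactCover (hv : 0 < v) {F : Finset G.Subgraph} (hF : IsHFactor H G F) :
    IsExactCover (fun K : G.Subgraph => K.verts.toFinset) univ F := by
  refine ⟨fun K hK => card_pos.1 (hF.card_verts hK ▸ hv), fun K hK K' hK' hne => ?_, ?_⟩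
  · refine disjoint_left.2 fun y hy hy' => hne ?_
    obtain ⟨W, -, hW⟩ := hF.2.2 y
    exact (hW K ⟨hK, by simpa using hy⟩).trans (hW K' ⟨hK', by simpa using hy'⟩).symm
  · refine eq_univ_of_forall fun y => ?_
    obtain ⟨K, hK, -⟩ := hF.2.2 y
    exact mem_biUnion.2 ⟨K, hK.1, by simpa using hK.2⟩

lemma sum_copyWeight_mem_verts (y : Fin n) :
    ∑ K with y ∈ K.verts, copyWeight H G K = numHFactors H G :=
  calc ∑ K with y ∈ K.verts, copyWeight H G K
      = ∑ K, #{F ∈ hFactors H G | K ∈ F} • if y ∈ K.verts then 1 else 0 := by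
        simp only [sum_filter, copyWeight_eq_card, smul_eq_mul, mul_ite, mul_one, mul_zero]
    _ = ∑ F ∈ hFactors H G, #{K ∈ F | y ∈ K.verts} := by
        rw [← sum_sum_eq_sum_card_smul]
        simp only [sum_boole, Nat.cast_id]
    _ = numHFactors H G := by
        rw [numHFactors_eq_card, card_eq_sum_ones]
        exact sum_congr rfl fun F hF => (mem_filter.1 hF).2.card_filter_mem_verts y

lemma copyProb_nonneg (K : G.Subgraph) : 0 ≤ copyProb H G K := by
  unfold copyProb
  positivity

lemma copyProb_pos {F : Finset G.Subgraph} (hF : F ∈ hFactors H G) {K : G.Subgraph}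
    (hK : K ∈ F) : 0 < copyProb H G K := by
  have hw : 0 < copyWeight H G K := by
    rw [copyWeight_eq_card]
    exact card_pos.2 ⟨F, mem_filter.2 ⟨hF, hK⟩⟩
  have hΦ : 0 < numHFactors H G := by
    rw [numHFactors_eq_card]
    exact card_pos.2 ⟨F, hF⟩
  unfold copyProb
  positivity

lemma card_verts_of_copyWeight_ne_zero {K : G.Subgraph} (hK : copyWeight H G K ≠ 0) :
    #K.verts.toFinset = v := by
  rw [copyWeight_eq_card, ← pos_iff_ne_zero, card_pos] at hK
  obtain ⟨F, hF⟩ := hK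
  exact (mem_filter.1 (mem_filter.1 hF).1).2.card_verts (mem_filter.1 hF).2

lemma sum_copyProb_mem_verts_le_one (y : Fin n) :
    ∑ K with y ∈ K.verts.toFinset, copyProb H G K ≤ 1 := by
  simp only [Set.mem_toFinset, copyProb, ← sum_div]
  rw [← Nat.cast_sum, sum_copyWeight_mem_verts]
  exact div_self_le_one _

lemma sum_prod_copyProb_le_one (hv : 0 < v) :
    ∑ F ∈ hFactors H G, ∏ K ∈ F, copyProb H G K ≤ 1 := by
  refine le_trans (sum_le_sum_of_subset_of_nonneg ?_ fun F _ _ => prod_nonneg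
    fun K _ => copyProb_nonneg K) (sum_prod_isExactCover_le_one copyProb_nonneg
      sum_copyProb_mem_verts_le_one univ)
  intro F hF
  exact mem_filter.2 ⟨mem_univ F, (mem_filter.1 hF).2.isExactCover hv⟩

lemma log_numHFactors_le_sum_negMulLog (hv : 0 < v) (hΦ : 0 < numHFactors H G) :
    log (numHFactors H G) ≤ ∑ K, negMulLog (copyProb H G K) := by
  have hΦ' : (0 : ℝ) < numHFactors H G := by exact_mod_cast hΦ
  have hsum : ∑ F ∈ hFactors H G, -log (∏ K ∈ F, copyProb H G K) =
      numHFactors H G * ∑ K, negMulLog (copyProb H G K) :=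
    calc ∑ F ∈ hFactors H G, -log (∏ K ∈ F, copyProb H G K)
        = ∑ F ∈ hFactors H G, ∑ K ∈ F, -log (copyProb H G K) := sum_congr rfl fun F hF => by
          rw [log_prod fun K hK => (copyProb_pos hF hK).ne', sum_neg_distrib]
      _ = ∑ K, (copyWeight H G K : ℝ) * -log (copyProb H G K) := by
          simp only [sum_sum_eq_sum_card_smul, copyWeight_eq_card, nsmul_eq_mul]
      _ = numHFactors H G * ∑ K, negMulLog (copyProb H G K) := by
          rw [mul_sum]
          refine sum_congr rfl fun K _ => ?_
          rw [negMulLog, copyProb]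
          field_simp
  have gibbs := card_mul_log_card_le_sum_neg_log (hFactors H G) _
    (fun F hF => prod_pos fun K hK => copyProb_pos hF hK) (sum_prod_copyProb_le_one hv)
  rw [hsum, ← numHFactors_eq_card] at gibbs
  exact le_of_mul_le_mul_left gibbs hΦ'

lemma hent_eq_sum_negMulLog (y : Fin n) :
    hent H G y = ∑ K with y ∈ K.verts, negMulLog (copyProb H G K) := by
  rw [hent, finsum_eq_sum_of_fintype, sum_filter]
  simp only [negMulLog, copyProb, neg_mul]

lemma sum_hent_eq : ∑ y, hent H G y = v * ∑ K, negMulLog (copyProb H G K) := by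
  simp only [hent_eq_sum_negMulLog]
  rw [sum_comm' (t' := univ) (s' := fun K => K.verts.toFinset) fun y K => by simp, mul_sum]
  refine sum_congr rfl fun K _ => ?_
  rw [sum_const, nsmul_eq_mul]
  by_cases hK : copyWeight H G K = 0
  · simp [copyProb, hK]
  · rw [card_verts_of_copyWeight_ne_zero hK]

end HFactor

theorem stmt10_general {v n : ℕ} (hv : 0 < v) (H : SimpleGraph (Fin v))
    (G : SimpleGraph (Fin n)) (hΦ : 1 ≤ numHFactors H G) :
    Real.log (numHFactors H G : ℝ) ≤ (1 / (v : ℝ)) * ∑ y : Fin n, hent H G y := by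
  rw [sum_hent_eq, one_div, inv_mul_cancel_left₀ (by positivity)]
  exact log_numHFactors_le_sum_negMulLog hv hΦ

/-- Shearer-type bound: `log Φ(G) ≤ (1/v)·Σ_y h(y,G)` for any graph `G` on `n` vertices
with at least one `H`-factor. -/
theorem stmt10 {v n : ℕ} (hv : 0 < v) (hvn : v ∣ n) (H : SimpleGraph (Fin v))
    (G : SimpleGraph (Fin n)) (hΦ : 1 ≤ numHFactors H G) :
    Real.log (numHFactors H G : ℝ) ≤ (1 / (v : ℝ)) * ∑ y : Fin n, hent H G y :=
  stmt10_general hv H G hΦ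
end

section
/- (Shearer's lemma) Let Y = (Y_i : i ∈ I) be a finite random vector and 𝒮 a finite multiset of subsets of I such that every i ∈ I belongs to at least t members of 𝒮 (t ≥ 1). Then H(Y) ≤ (1/t)·Σ_{S ∈ 𝒮} H(Y_S), where Y_S = (Y_i : i ∈ S). -/
open Classical in
/-- The natural-log Shannon entropy of the random variable `f` on the finite probability
space `(Ω, μ)`: `H(f) = -Σ_ω μ(ω)·log Pr(f = f(ω))`. -/
noncomputable def fent {Ω β : Type*} [Fintype Ω] (μ : Ω → ℝ) (f : Ω → β) : ℝ :=
  ∑ ω : Ω, -(μ ω * Real.log (∑ ω' ∈ Finset.univ.filter (fun ω' => f ω' = f ω), μ ω'))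

set_option linter.unusedSectionVars false
set_option linter.unusedVariables false

namespace Shearer

open Finset Classical

variable {Ω : Type*} [Fintype Ω] {β γ δ : Type*} {μ : Ω → ℝ}

open Classical in
noncomputable def pr (μ : Ω → ℝ) (f : Ω → β) (b : β) : ℝ :=
  ∑ ω' ∈ Finset.univ.filter (fun ω' => f ω' = b), μ ω'

theorem fent_eq (μ : Ω → ℝ) (f : Ω → β) :
    fent μ f = ∑ ω : Ω, -(μ ω * Real.log (pr μ f (f ω))) := rfl

theorem pr_nonneg (hμ0 : ∀ ω, 0 ≤ μ ω) (f : Ω → β) (b : β) : 0 ≤ pr μ f b :=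
  Finset.sum_nonneg fun ω _ => hμ0 ω

theorem le_pr (hμ0 : ∀ ω, 0 ≤ μ ω) (f : Ω → β) (ω : Ω) : μ ω ≤ pr μ f (f ω) :=
  Finset.single_le_sum (fun ω _ => hμ0 ω) (by simp)

theorem sum_pr_eq (μ : Ω → ℝ) (f : Ω → β) (T : Finset β) :
    ∑ b ∈ T, pr μ f b = ∑ ω ∈ Finset.univ.filter (fun ω => f ω ∈ T), μ ω := by
  simpa [pr] using Finset.sum_fiberwise_eq_sum_filter Finset.univ T f μ

theorem sum_pr_le_one (hμ0 : ∀ ω, 0 ≤ μ ω) (hμ1 : ∑ ω : Ω, μ ω = 1)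
    (f : Ω → β) (T : Finset β) : ∑ b ∈ T, pr μ f b ≤ 1 := by
  rw [sum_pr_eq, ← hμ1]
  exact Finset.sum_le_sum_of_subset_of_nonneg (Finset.subset_univ _) (fun ω _ _ => hμ0 ω)

theorem fent_congr {f : Ω → β} {g : Ω → γ} (h : ∀ ω ω', f ω = f ω' ↔ g ω = g ω') :
    fent μ f = fent μ g := by
  rw [fent_eq, fent_eq]
  refine Finset.sum_congr rfl fun ω _ => ?_
  have : pr μ f (f ω) = pr μ g (g ω) := by
    refine Finset.sum_congr ?_ fun _ _ => rfl
    ext ω'; simp [h ω' ω]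
  rw [this]

theorem fent_const (hμ1 : ∑ ω : Ω, μ ω = 1) {f : Ω → β} (h : ∀ ω ω', f ω = f ω') :
    fent μ f = 0 := by
  rw [fent_eq]
  refine Finset.sum_eq_zero fun ω _ => ?_
  have : pr μ f (f ω) = 1 := by
    rw [pr, Finset.filter_true_of_mem (fun ω' _ => h ω' ω)]; exact hμ1
  simp [this]

theorem fent_comp_le (hμ0 : ∀ ω, 0 ≤ μ ω) (f : Ω → β) (h : β → γ) :
    fent μ (fun ω => h (f ω)) ≤ fent μ f := by
  rw [fent_eq, fent_eq]
  refine Finset.sum_le_sum fun ω _ => ?_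
  rcases (hμ0 ω).eq_or_lt with h0 | h0
  · simp [← h0]
  · have h1 : 0 < pr μ f (f ω) := lt_of_lt_of_le h0 (le_pr hμ0 f ω)
    have h2 : pr μ f (f ω) ≤ pr μ (fun ω => h (f ω)) (h (f ω)) := by
      refine Finset.sum_le_sum_of_subset_of_nonneg ?_ (fun ω _ _ => hμ0 ω)
      intro x hx; simp only [Finset.mem_filter, Finset.mem_univ, true_and] at hx ⊢
      rw [hx]
    have h3 := Real.log_le_log h1 h2
    nlinarith [h3, h0.le]


theorem fent_submodular (hμ0 : ∀ ω, 0 ≤ μ ω) (hμ1 : ∑ ω : Ω, μ ω = 1)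
    (f : Ω → β) (g : Ω → γ) (h : γ → δ) :
    fent μ (fun ω => (f ω, g ω)) + fent μ (fun ω => h (g ω)) ≤
      fent μ (fun ω => (f ω, h (g ω))) + fent μ g := by
  classical
  set F : Ω → β × γ := fun ω => (f ω, g ω) with hF
  set G : Ω → β × δ := fun ω => (f ω, h (g ω)) with hG
  set hg : Ω → δ := fun ω => h (g ω) with hhg
  set a : Ω → ℝ := fun ω => pr μ F (F ω) with ha
  set b : Ω → ℝ := fun ω => pr μ g (g ω) with hb
  set c : Ω → ℝ := fun ω => pr μ G (G ω) with hc
  set d : Ω → ℝ := fun ω => pr μ hg (hg ω) with hd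
  -- the key combinatorial bound
  set φ : β × γ → ℝ := fun v => pr μ g v.2 * pr μ G (v.1, h v.2) / pr μ hg (h v.2) with hφ
  have hφ0 : ∀ v, 0 ≤ φ v := by
    intro v
    have := pr_nonneg hμ0 g v.2
    have := pr_nonneg hμ0 G (v.1, h v.2)
    have := pr_nonneg hμ0 hg (h v.2)
    positivity
  have key : ∑ ω : Ω, μ ω * (b ω * c ω / (a ω * d ω)) ≤ 1 := by
    have step1 : ∑ ω : Ω, μ ω * (b ω * c ω / (a ω * d ω)) ≤
        ∑ v ∈ Finset.univ.image F, φ v := by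
      rw [← Finset.sum_fiberwise_of_maps_to
        (g := F) (t := Finset.univ.image F)
        (fun ω _ => Finset.mem_image_of_mem F (Finset.mem_univ ω))
        (fun ω => μ ω * (b ω * c ω / (a ω * d ω)))]
      refine Finset.sum_le_sum fun v hv => ?_
      have hfib : ∀ ω ∈ Finset.univ.filter (fun ω => F ω = v),
          μ ω * (b ω * c ω / (a ω * d ω)) =
            μ ω * (pr μ g v.2 * pr μ G (v.1, h v.2) / (pr μ F v * pr μ hg (h v.2))) := by
        intro ω hω
        have hωv : F ω = v := (Finset.mem_filter.mp hω).2
        have h2 : g ω = v.2 := by rw [← hωv]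
        have h1 : f ω = v.1 := by rw [← hωv]
        simp only [ha, hb, hc, hd, hG, hhg, hωv, h1, h2]
      rw [Finset.sum_congr rfl hfib, ← Finset.sum_mul]
      have hsum : ∑ ω ∈ Finset.univ.filter (fun ω => F ω = v), μ ω = pr μ F v := by
        rw [pr]; exact Finset.sum_congr (by ext ω; simp) fun _ _ => rfl
      rw [hsum]
      by_cases hp : pr μ F v = 0
      · rw [hp]; simpa using hφ0 v
      · have : pr μ F v * (pr μ g v.2 * pr μ G (v.1, h v.2) / (pr μ F v * pr μ hg (h v.2)))
            = φ v := by
          simp only [hφ]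
          rw [← div_div, show pr μ g v.2 * pr μ G (v.1, h v.2) / pr μ F v / pr μ hg (h v.2)
              = pr μ g v.2 * pr μ G (v.1, h v.2) / pr μ hg (h v.2) / pr μ F v by ring,
            mul_div_cancel₀ _ hp]
        rw [this]
    have step3 : ∑ v ∈ Finset.univ.image F, φ v ≤
        ∑ w ∈ (Finset.univ.image F).image (fun v : β × γ => (v.1, h v.2)), pr μ G w := by
      rw [← Finset.sum_fiberwise_of_maps_to
        (g := fun v : β × γ => (v.1, h v.2))
        (fun v hv => Finset.mem_image_of_mem _ hv) φ]
      refine Finset.sum_le_sum fun w hw => ?_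
      set V := (Finset.univ.image F).filter (fun v : β × γ => (v.1, h v.2) = w) with hV
      have hterm : ∀ v ∈ V, φ v = pr μ g v.2 * (pr μ G w / pr μ hg w.2) := by
        intro v hv
        have hvw : (v.1, h v.2) = w := (Finset.mem_filter.mp hv).2
        have h2 : h v.2 = w.2 := by rw [← hvw]
        simp only [hφ]; rw [hvw, h2, mul_div_assoc]
      rw [Finset.sum_congr rfl hterm, ← Finset.sum_mul]
      -- sum of pr g over distinct second coordinates
      have hinj : ∀ v₁ ∈ V, ∀ v₂ ∈ V, v₁.2 = v₂.2 → v₁ = v₂ := by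
        intro v₁ h₁ v₂ h₂ h12
        have e₁ : (v₁.1, h v₁.2) = w := (Finset.mem_filter.mp h₁).2
        have e₂ : (v₂.1, h v₂.2) = w := (Finset.mem_filter.mp h₂).2
        have : v₁.1 = v₂.1 := by
          have := e₁.trans e₂.symm
          exact (Prod.mk.injEq _ _ _ _ ▸ this).1
        exact Prod.ext this h12
      have hsnd : ∑ v ∈ V, pr μ g v.2 = ∑ y ∈ V.image Prod.snd, pr μ g y :=
        (Finset.sum_image hinj).symm
      have hbound : ∑ y ∈ V.image Prod.snd, pr μ g y ≤ pr μ hg w.2 := by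
        rw [sum_pr_eq]
        refine Finset.sum_le_sum_of_subset_of_nonneg ?_ (fun ω _ _ => hμ0 ω)
        intro ω hω
        simp only [Finset.mem_filter, Finset.mem_univ, true_and] at hω ⊢
        obtain ⟨v, hv, hv2⟩ := Finset.mem_image.mp hω
        have hvw : (v.1, h v.2) = w := (Finset.mem_filter.mp hv).2
        have : h (g ω) = h v.2 := by rw [hv2]
        rw [hhg]; simp only []
        rw [this, show h v.2 = w.2 from by rw [← hvw]]
      by_cases hz : pr μ hg w.2 = 0
      · rw [hz]
        have : pr μ G w / (0:ℝ) = 0 := by simp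
        rw [this, mul_zero]
        exact pr_nonneg hμ0 G w
      · have hzpos : 0 < pr μ hg w.2 := lt_of_le_of_ne (pr_nonneg hμ0 hg w.2) (Ne.symm hz)
        have h1 : ∑ v ∈ V, pr μ g v.2 ≤ pr μ hg w.2 := hsnd ▸ hbound
        have h2 : 0 ≤ pr μ G w / pr μ hg w.2 :=
          div_nonneg (pr_nonneg hμ0 G w) hzpos.le
        calc (∑ v ∈ V, pr μ g v.2) * (pr μ G w / pr μ hg w.2)
            ≤ pr μ hg w.2 * (pr μ G w / pr μ hg w.2) := by
              exact mul_le_mul_of_nonneg_right h1 h2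
          _ = pr μ G w := by field_simp
    have step4 : ∑ w ∈ (Finset.univ.image F).image (fun v : β × γ => (v.1, h v.2)),
        pr μ G w ≤ 1 := sum_pr_le_one hμ0 hμ1 G _
    linarith
  -- pointwise logarithmic bound
  have main : ∑ ω : Ω, μ ω * (Real.log (b ω) + Real.log (c ω) - Real.log (a ω) - Real.log (d ω)) ≤ 0 := by
    have hterm : ∀ ω ∈ (Finset.univ : Finset Ω),
        μ ω * (Real.log (b ω) + Real.log (c ω) - Real.log (a ω) - Real.log (d ω)) ≤
          μ ω * (b ω * c ω / (a ω * d ω)) - μ ω := by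
      intro ω _
      rcases (hμ0 ω).eq_or_lt with h0 | h0
      · simp [← h0]
      · have hA : 0 < a ω := lt_of_lt_of_le h0 (le_pr hμ0 F ω)
        have hB : 0 < b ω := lt_of_lt_of_le h0 (le_pr hμ0 g ω)
        have hC : 0 < c ω := lt_of_lt_of_le h0 (le_pr hμ0 G ω)
        have hD : 0 < d ω := lt_of_lt_of_le h0 (le_pr hμ0 hg ω)
        have hlog : Real.log (b ω) + Real.log (c ω) - Real.log (a ω) - Real.log (d ω)
            = Real.log (b ω * c ω / (a ω * d ω)) := by
          rw [Real.log_div (by positivity) (by positivity),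
            Real.log_mul hB.ne' hC.ne', Real.log_mul hA.ne' hD.ne']
          ring
        rw [hlog]
        have hx : 0 < b ω * c ω / (a ω * d ω) := by positivity
        have := Real.log_le_sub_one_of_pos hx
        nlinarith [this, h0.le]
    calc ∑ ω : Ω, μ ω * (Real.log (b ω) + Real.log (c ω) - Real.log (a ω) - Real.log (d ω))
        ≤ ∑ ω : Ω, (μ ω * (b ω * c ω / (a ω * d ω)) - μ ω) := Finset.sum_le_sum hterm
      _ = (∑ ω : Ω, μ ω * (b ω * c ω / (a ω * d ω))) - 1 := by
          rw [Finset.sum_sub_distrib, hμ1]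
      _ ≤ 0 := by linarith
  have hexp : fent μ F + fent μ hg - fent μ G - fent μ g =
      ∑ ω : Ω, μ ω * (Real.log (b ω) + Real.log (c ω) - Real.log (a ω) - Real.log (d ω)) := by
    rw [fent_eq μ F, fent_eq μ hg, fent_eq μ G, fent_eq μ g,
      ← Finset.sum_add_distrib, ← Finset.sum_sub_distrib, ← Finset.sum_sub_distrib]
    exact Finset.sum_congr rfl fun ω _ => by ring
  linarith [hexp, main]


section R

variable {I : Type*} {α : I → Type*}

open Classical in
noncomputable def R (Y : Ω → ∀ i, α i) (S : Set I) : Ω → ∀ i, Option (α i) :=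
  fun ω i => if i ∈ S then some (Y ω i) else none

open Classical in
noncomputable def restr (S : Set I) : (∀ i, Option (α i)) → ∀ i, Option (α i) :=
  fun v i => if i ∈ S then v i else none

theorem R_eq_iff (Y : Ω → ∀ i, α i) (S : Set I) (ω ω' : Ω) :
    R Y S ω = R Y S ω' ↔ ∀ i ∈ S, Y ω i = Y ω' i := by
  constructor
  · intro h i hi
    have := congrFun h i
    simp only [R, if_pos hi] at this
    exact Option.some_injective _ this
  · intro h
    funext i
    by_cases hi : i ∈ S
    · simp only [R, if_pos hi, h i hi]
    · simp only [R, if_neg hi]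

theorem restr_R (Y : Ω → ∀ i, α i) {B C : Set I} (hBC : B ⊆ C) :
    (fun ω => restr B (R Y C ω)) = R Y B := by
  funext ω i
  by_cases hi : i ∈ B
  · simp only [restr, R, if_pos hi, if_pos (hBC hi)]
  · simp only [restr, R, if_neg hi]

theorem fent_R_mono (hμ0 : ∀ ω, 0 ≤ μ ω) (Y : Ω → ∀ i, α i) {B C : Set I} (hBC : B ⊆ C) :
    fent μ (R Y B) ≤ fent μ (R Y C) := by
  rw [← restr_R Y hBC]
  exact fent_comp_le hμ0 (R Y C) (restr B)

theorem fent_R_union (hμ0 : ∀ ω, 0 ≤ μ ω) (Y : Ω → ∀ i, α i) (A C : Set I) :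
    fent μ (fun ω => (R Y A ω, R Y C ω)) = fent μ (R Y (A ∪ C)) := by
  refine fent_congr fun ω ω' => ?_
  rw [Prod.mk.injEq, R_eq_iff, R_eq_iff, R_eq_iff]
  constructor
  · rintro ⟨h1, h2⟩ i (hi | hi)
    exacts [h1 i hi, h2 i hi]
  · intro h
    exact ⟨fun i hi => h i (Or.inl hi), fun i hi => h i (Or.inr hi)⟩

theorem cond_mono (hμ0 : ∀ ω, 0 ≤ μ ω) (hμ1 : ∑ ω : Ω, μ ω = 1) (Y : Ω → ∀ i, α i)
    (A : Set I) {C C' : Set I} (hC : C' ⊆ C) :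
    fent μ (R Y (A ∪ C)) - fent μ (R Y C) ≤ fent μ (R Y (A ∪ C')) - fent μ (R Y C') := by
  have h1 := fent_submodular hμ0 hμ1 (R Y A) (R Y C) (restr C')
  have hr : ∀ ω, restr C' (R Y C ω) = R Y C' ω := fun ω => congrFun (restr_R Y hC) ω
  simp only [hr] at h1
  rw [fent_R_union hμ0 Y A C, fent_R_union hμ0 Y A C'] at h1
  linarith

end R


theorem multiset_sum_map_le {ι : Type*} (s : Multiset ι) (fM gM : ι → ℝ)
    (h : ∀ x ∈ s, fM x ≤ gM x) : (s.map fM).sum ≤ (s.map gM).sum := by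
  induction s using Multiset.induction_on with
  | empty => simp
  | cons a s ih =>
    simp only [Multiset.map_cons, Multiset.sum_cons]
    have h1 := h a (Multiset.mem_cons_self a s)
    have h2 := ih fun x hx => h x (Multiset.mem_cons_of_mem hx)
    linarith

end Shearer

open Classical in
/-- Shearer's lemma: if `Y = (Y_i : i ∈ I)` is a finite random vector and `𝒮` a finite
multiset of subsets of `I` covering every `i ∈ I` at least `t ≥ 1` times, then
`H(Y) ≤ (1/t)·Σ_{S ∈ 𝒮} H(Y_S)`. -/
theorem stmt11 {Ω I : Type*} [Fintype Ω] [Fintype I] (α : I → Type*)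
    (μ : Ω → ℝ) (hμ0 : ∀ ω, 0 ≤ μ ω) (hμ1 : ∑ ω : Ω, μ ω = 1)
    (Y : Ω → ∀ i, α i) (𝒮 : Multiset (Set I)) (t : ℕ) (ht : 1 ≤ t)
    (hcover : ∀ i : I, t ≤ 𝒮.countP (fun s => i ∈ s)) :
    fent μ Y ≤ (1 / (t : ℝ)) *
      (𝒮.map (fun (s : Set I) => fent μ (fun ω => fun (i : ↥s) => Y ω i.1))).sum := by
  classical
  set n := Fintype.card I with hn
  set idx : I ≃ Fin n := Fintype.equivFin I with hidx
  set e : Fin n → I := fun k => idx.symm k with he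
  set D : ℕ → Set I := fun k => {i | (idx i : ℕ) < k} with hD
  set ent : Set I → ℝ := fun S => fent μ (Shearer.R Y S) with hent
  set c : ℕ → ℝ := fun k => ent (D (k + 1)) - ent (D k) with hc
  -- telescoping
  have hD0 : ∀ S : Set I, S ∩ D 0 = ∅ := by
    intro S; ext i; simp [hD]
  have hDn : ∀ S : Set I, S ∩ D n = S := by
    intro S; ext i; simp only [hD, Set.mem_inter_iff, Set.mem_setOf_eq, and_iff_left_iff_imp]
    exact fun _ => (idx i).2
  have hent_empty : ent ∅ = 0 := by
    refine Shearer.fent_const hμ1 fun ω ω' => ?_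
    funext i; simp [Shearer.R]
  have tele : ∀ S : Set I, ent S =
      ∑ k : Fin n, (ent (S ∩ D ((k : ℕ) + 1)) - ent (S ∩ D (k : ℕ))) := by
    intro S
    rw [Fin.sum_univ_eq_sum_range (fun k => ent (S ∩ D (k + 1)) - ent (S ∩ D k)) n,
      Finset.sum_range_sub (fun k => ent (S ∩ D k)) n, hD0, hDn, hent_empty, sub_zero]
  -- chain-step inequality
  have hmemD : ∀ (i : I) (k : ℕ), i ∈ D k ↔ (idx i : ℕ) < k := fun i k => Iff.rfl
  have hstep : ∀ (S : Set I) (k : Fin n),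
      (if e k ∈ S then c (k : ℕ) else 0) ≤ ent (S ∩ D ((k : ℕ) + 1)) - ent (S ∩ D (k : ℕ)) := by
    intro S k
    have hsplit : ∀ (T : Set I), e k ∈ T → T ∩ D ((k : ℕ) + 1) = {e k} ∪ (T ∩ D (k : ℕ)) := by
      intro T hT
      ext i
      simp only [Set.mem_inter_iff, Set.mem_union, Set.mem_singleton_iff, hmemD]
      constructor
      · rintro ⟨hiT, hlt⟩
        rcases Nat.lt_succ_iff_lt_or_eq.mp hlt with h' | h'
        · exact Or.inr ⟨hiT, h'⟩
        · left
          have : idx i = k := Fin.ext h'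
          simp only [he]; rw [← this, Equiv.symm_apply_apply]
      · rintro (h' | ⟨hiT, hlt⟩)
        · subst h'
          refine ⟨hT, ?_⟩
          simp only [he]; rw [Equiv.apply_symm_apply]
          exact Nat.lt_succ_self _
        · exact ⟨hiT, Nat.lt_succ_of_lt hlt⟩
    by_cases hk : e k ∈ S
    · rw [if_pos hk]
      have h1 : S ∩ D ((k : ℕ) + 1) = {e k} ∪ (S ∩ D (k : ℕ)) := hsplit S hk
      have h2 : D ((k : ℕ) + 1) = {e k} ∪ D (k : ℕ) := by
        have := hsplit Set.univ (Set.mem_univ _)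
        simpa [Set.univ_inter] using this
      have hsub : S ∩ D (k : ℕ) ⊆ D (k : ℕ) := Set.inter_subset_right
      have := Shearer.cond_mono hμ0 hμ1 Y {e k} hsub
      rw [hc]
      simp only []
      rw [h1, h2]
      exact this
    · rw [if_neg hk]
      have h1 : S ∩ D ((k : ℕ) + 1) = S ∩ D (k : ℕ) := by
        ext i
        simp only [Set.mem_inter_iff, hmemD, and_congr_right_iff]
        intro hiS
        constructor
        · intro hlt
          rcases Nat.lt_succ_iff_lt_or_eq.mp hlt with h' | h'
          · exact h'
          · exfalso
            have : idx i = k := Fin.ext h'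
            have : i = e k := by simp only [he]; rw [← this, Equiv.symm_apply_apply]
            exact hk (this ▸ hiS)
        · exact Nat.lt_succ_of_lt
      rw [h1, sub_self]
  have hc0 : ∀ k : Fin n, 0 ≤ c (k : ℕ) := by
    intro k
    have : D (k : ℕ) ⊆ D ((k : ℕ) + 1) := fun i hi => Nat.lt_succ_of_lt hi
    exact sub_nonneg.mpr (Shearer.fent_R_mono hμ0 Y this)
  -- lower bound each entropy in the multiset
  set LB : Set I → ℝ := fun S => ∑ k : Fin n, (if e k ∈ S then c (k : ℕ) else 0) with hLB
  have hLB_le : ∀ S : Set I, LB S ≤ fent μ (fun ω => fun (i : ↥S) => Y ω i.1) := by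
    intro S
    have h1 : LB S ≤ ent S := by
      rw [tele S]
      exact Finset.sum_le_sum fun k _ => hstep S k
    have h2 : ent S = fent μ (fun ω => fun (i : ↥S) => Y ω i.1) := by
      refine Shearer.fent_congr fun ω ω' => ?_
      rw [Shearer.R_eq_iff]
      constructor
      · intro h
        funext i
        exact h i.1 i.2
      · intro h i hi
        exact congrFun h ⟨i, hi⟩
    linarith
  have hmap : (𝒮.map LB).sum ≤
      (𝒮.map (fun (s : Set I) => fent μ (fun ω => fun (i : ↥s) => Y ω i.1))).sum :=
    Shearer.multiset_sum_map_le 𝒮 _ _ fun S _ => hLB_le S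
  -- compute the sum of lower bounds
  have hLBsum : ∀ s𝒮 : Multiset (Set I), (s𝒮.map LB).sum =
      ∑ k : Fin n, (s𝒮.countP (fun S => e k ∈ S) : ℝ) * c (k : ℕ) := by
    intro s𝒮
    induction s𝒮 using Multiset.induction_on with
    | empty => simp
    | cons a s ih =>
      rw [Multiset.map_cons, Multiset.sum_cons, ih]
      rw [← Finset.sum_add_distrib]
      refine Finset.sum_congr rfl fun k _ => ?_
      rw [Multiset.countP_cons]
      by_cases hk : e k ∈ a
      · simp only [hk, if_pos]
        push_cast
        ring
      · simp only [hk, if_neg, if_false]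
        push_cast
        ring
  -- entropy of the full vector
  have hY : fent μ Y = ent Set.univ := by
    refine Shearer.fent_congr fun ω ω' => ?_
    rw [Shearer.R_eq_iff]
    constructor
    · intro h i _
      exact congrFun h i
    · intro h
      funext i
      exact h i (Set.mem_univ i)
  have hYsum : fent μ Y = ∑ k : Fin n, c (k : ℕ) := by
    rw [hY, tele Set.univ]
    refine Finset.sum_congr rfl fun k _ => ?_
    rw [Set.univ_inter, Set.univ_inter]
  have hcount : ∀ k : Fin n, (t : ℝ) * c (k : ℕ) ≤ (𝒮.countP (fun S => e k ∈ S) : ℝ) * c (k : ℕ) := by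
    intro k
    refine mul_le_mul_of_nonneg_right ?_ (hc0 k)
    exact_mod_cast hcover (e k)
  have htotal : (t : ℝ) * fent μ Y ≤
      (𝒮.map (fun (s : Set I) => fent μ (fun ω => fun (i : ↥s) => Y ω i.1))).sum := by
    calc (t : ℝ) * fent μ Y = ∑ k : Fin n, (t : ℝ) * c (k : ℕ) := by
          rw [hYsum, Finset.mul_sum]
      _ ≤ ∑ k : Fin n, (𝒮.countP (fun S => e k ∈ S) : ℝ) * c (k : ℕ) :=
          Finset.sum_le_sum fun k _ => hcount k
      _ = (𝒮.map LB).sum := (hLBsum 𝒮).symm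
      _ ≤ _ := hmap
  have htpos : (0 : ℝ) < t := by exact_mod_cast ht
  rw [one_div, inv_mul_eq_div, le_div_iff₀ htpos]
  linarith [htotal]
end

section
/- Fix a strictly balanced graph H with v vertices and m edges, fix x₀ ∈ [n], and let f = Σ_U t_U where U runs over edge sets of copies of H in K_n containing x₀ and t_e are i.i.d. Bernoulli(p) edge indicators. Then E f = Θ(n^{v−1} p^m), and for any nonempty L ⊆ E(K_n) with |L| = m' < m edges spanning v' vertices (together with x₀, if L covers x₀ then v' includes x₀) such that (V(L)∪{x₀}, L) is a subgraph of some copy of H through x₀, one has E f / E_L f = Ω(n^{v'−1} p^{m'}); in particular if p = Ω(n^{−(v−1)/m}) then E f / E_L f ≥ n^{Ω(1)}. -/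
open SimpleGraph

noncomputable def subgraphDensity {V : Type*} {H : SimpleGraph V} (H' : H.Subgraph) : ℝ :=
  (H'.edgeSet.ncard : ℝ) / ((H'.verts.ncard : ℝ) - 1)

noncomputable def graphDensity {V : Type*} [Fintype V] (H : SimpleGraph V) : ℝ :=
  (H.edgeSet.ncard : ℝ) / ((Fintype.card V : ℝ) - 1)

def StrictlyBalanced {V : Type*} [Fintype V] (H : SimpleGraph V) : Prop :=
  ∀ H' : H.Subgraph, H' ≠ ⊤ → 2 ≤ H'.verts.ncard → subgraphDensity H' < graphDensity H

/-- The edge sets of (unlabeled) copies of `H` in `K_n` whose vertex set contains `x₀`. -/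
def copyEdgeSets (v n : ℕ) (H : SimpleGraph (Fin v)) [DecidableRel H.Adj]
    (x₀ : Fin n) : Set (Finset (Sym2 (Fin n))) :=
  {U | ∃ φ : Fin v ↪ Fin n, (∃ a : Fin v, φ a = x₀) ∧
    U = H.edgeFinset.image (fun e => e.map φ)}

/-- The set of vertices spanned by the edges in `L`, together with `x₀`. -/
def vertSpan {n : ℕ} (L : Finset (Sym2 (Fin n))) (x₀ : Fin n) : Set (Fin n) :=
  {x | x = x₀ ∨ ∃ e ∈ L, x ∈ e}

/-- `E f` for `f = Σ_U t_U`, `U` over edge sets of copies of `H` through `x₀`. -/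
noncomputable def Ef (v n : ℕ) (H : SimpleGraph (Fin v)) [DecidableRel H.Adj]
    (x₀ : Fin n) (m : ℕ) (p : ℝ) : ℝ :=
  ((copyEdgeSets v n H x₀).ncard : ℝ) * p ^ m

/-- `E_L f`, the expectation of the partial derivative of `f` with respect to `L`. -/
noncomputable def ELf (v n : ℕ) (H : SimpleGraph (Fin v)) [DecidableRel H.Adj]
    (x₀ : Fin n) (m : ℕ) (p : ℝ) (L : Finset (Sym2 (Fin n))) : ℝ :=
  ({U ∈ copyEdgeSets v n H x₀ | L ⊆ U}.ncard : ℝ) * p ^ (m - L.card)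

/-!
Copies of `H` through `x₀` are the images of embeddings `φ : Fin v ↪ Fin n` hitting `x₀`. A
strictly balanced graph has no isolated vertex, so the embedding of a copy is determined up to
at most `v ^ v` choices, and the number of copies is of order `n ^ (v - 1)`. A copy containing
`L` must cover the `v'` vertices spanned by `L` and `x₀`, which leaves `O(n ^ (v - v'))` copies.
Pulling `L` back along `φ` gives a proper subgraph of `H` with `m'` edges on `v'` vertices, so
strict balance yields the integer inequality `m' (v - 1) < m (v' - 1)`; its integrality makes
`n ^ (v' - 1) * p ^ m' ≥ n ^ (1 / m)` uniformly in `L` once `p ≥ n ^ (-(v - 1) / m)`.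
-/

open Finset

section EmbeddingCount

variable {α β : Type*} [Fintype α] [Fintype β] [DecidableEq α] [DecidableEq β]

theorem card_embedding_surjOn_le (S : Finset β) :
    #{φ : α ↪ β | ∀ b ∈ S, ∃ a, φ a = b} ≤
      Fintype.card α ^ #S * Fintype.card β ^ (Fintype.card α - #S) := by
  have hcover : ({φ : α ↪ β | ∀ b ∈ S, ∃ a, φ a = b} : Finset (α ↪ β)) ⊆
      (univ : Finset (S ↪ α)).biUnion fun g => {φ : α ↪ β | ∀ s, φ (g s) = s} := by
    intro φ hφ
    simp only [mem_filter, mem_univ, true_and] at hφ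
    choose g hg using fun s : S => hφ s s.2
    have hg_inj : Function.Injective g := fun s t h => Subtype.ext (by rw [← hg s, ← hg t, h])
    simp only [mem_biUnion, mem_univ, mem_filter, true_and]
    exact ⟨⟨g, hg_inj⟩, hg⟩
  -- Such a `φ` is determined by its values off the image of `g`.
  have hfiber (g : S ↪ α) :
      #{φ : α ↪ β | ∀ s, φ (g s) = s} ≤ Fintype.card β ^ (Fintype.card α - #S) := by
    calc #{φ : α ↪ β | ∀ s, φ (g s) = s}
        ≤ #(univ : Finset (↥(univ.map g)ᶜ → β)) := by
          refine card_le_card_of_injOn (fun φ a => φ a) (fun _ _ => mem_coe.2 (mem_univ _)) ?_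
          intro φ₁ h₁ φ₂ h₂ h
          simp only [coe_filter, mem_univ, true_and, Set.mem_ofPred_eq] at h₁ h₂
          refine DFunLike.ext _ _ fun a => ?_
          by_cases ha : a ∈ univ.map g
          · obtain ⟨s, -, rfl⟩ := mem_map.1 ha
            rw [h₁, h₂]
          · exact congrFun h ⟨a, mem_compl.2 ha⟩
      _ = Fintype.card β ^ (Fintype.card α - #S) := by
          rw [card_univ, Fintype.card_fun, Fintype.card_coe, card_compl, card_map, card_univ,
            Fintype.card_coe]
  calc #{φ : α ↪ β | ∀ b ∈ S, ∃ a, φ a = b}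
      ≤ ∑ g : S ↪ α, #{φ : α ↪ β | ∀ s, φ (g s) = s} :=
        (card_le_card hcover).trans card_biUnion_le
    _ ≤ ∑ _g : S ↪ α, Fintype.card β ^ (Fintype.card α - #S) := sum_le_sum fun g _ => hfiber g
    _ ≤ Fintype.card α ^ #S * Fintype.card β ^ (Fintype.card α - #S) := by
        rw [sum_const, card_univ, smul_eq_mul, Fintype.card_embedding_eq, Fintype.card_coe]
        exact Nat.mul_le_mul_right _ (Nat.descFactorial_le_pow _ _)

theorem descFactorial_le_card_embedding_zero_eq {k : ℕ} (b : β) :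
    (Fintype.card β - 1).descFactorial k ≤ #{φ : Fin (k + 1) ↪ β | φ 0 = b} := by
  let extend (ψ : Fin k ↪ {y // y ≠ b}) : Fin (k + 1) ↪ β :=
    ⟨Fin.cons b (Subtype.val ∘ ψ), Fin.cons_injective_of_injective
      (by rintro ⟨i, hi⟩; exact (ψ i).2 hi) (Subtype.val_injective.comp ψ.injective)⟩
  have h_inj : Function.Injective extend := by
    intro ψ₁ ψ₂ h
    refine DFunLike.ext _ _ fun i => Subtype.ext ?_
    simpa [extend] using congrArg (fun φ : Fin (k + 1) ↪ β => φ i.succ) h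
  calc (Fintype.card β - 1).descFactorial k = #(univ.map ⟨extend, h_inj⟩) := by
        simp [Fintype.card_embedding_eq, Fintype.card_subtype_compl]
    _ ≤ #{φ : Fin (k + 1) ↪ β | φ 0 = b} := by
        refine card_le_card fun φ hφ => ?_
        obtain ⟨ψ, -, rfl⟩ := mem_map.1 hφ
        simp [extend]

end EmbeddingCount

section StrictlyBalanced

variable {V : Type*} [Fintype V] {H : SimpleGraph V}

theorem SimpleGraph.Subgraph.two_le_ncard_verts {H' : H.Subgraph} (h : H'.edgeSet.Nonempty) :
    2 ≤ H'.verts.ncard := by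
  obtain ⟨e, he⟩ := h
  induction e using Sym2.ind with
  | _ a b =>
    exact (Set.one_lt_ncard_iff).2 ⟨a, b, H'.edge_vert he, H'.edge_vert he.symm, he.ne⟩

theorem StrictlyBalanced.ncard_edgeSet_mul_lt (hbal : StrictlyBalanced H) {H' : H.Subgraph}
    (hne : H' ≠ ⊤) (h2 : 2 ≤ H'.verts.ncard) :
    H'.edgeSet.ncard * (Fintype.card V - 1) < H.edgeSet.ncard * (H'.verts.ncard - 1) := by
  have hle : H'.verts.ncard ≤ Fintype.card V := by
    simpa [Nat.card_eq_fintype_card] using Set.ncard_le_card H'.verts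
  have hlt := hbal H' hne h2
  rw [subgraphDensity, graphDensity,
    div_lt_div_iff₀ (by norm_num; exact_mod_cast h2) (by norm_num; exact_mod_cast h2.trans hle)]
    at hlt
  rw [← Nat.cast_lt (α := ℝ)]
  push_cast [Nat.cast_sub (one_le_two.trans h2), Nat.cast_sub (one_le_two.trans (h2.trans hle))]
  exact hlt

theorem StrictlyBalanced.exists_adj (hbal : StrictlyBalanced H) (hE : H.edgeSet.Nonempty)
    (a : V) : ∃ b, H.Adj a b := by
  by_contra! ha
  -- Deleting the isolated vertex `a` keeps every edge and so would raise the density.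
  set H' := (⊤ : H.Subgraph).deleteVerts {a}
  have hedge : H'.edgeSet = H.edgeSet := by
    ext e
    induction e using Sym2.ind with
    | _ x y =>
      simp only [H', Subgraph.mem_edgeSet, Subgraph.deleteVerts_adj, Subgraph.top_adj,
        Subgraph.verts_top, Set.mem_univ, Set.mem_singleton_iff, true_and, mem_edgeSet]
      exact ⟨fun h => h.2.2, fun h => ⟨fun hx => ha y (hx ▸ h), fun hy => ha x (hy ▸ h.symm), h⟩⟩
  have hverts : H'.verts.ncard = Fintype.card V - 1 := by
    simp [H', Set.ncard_sdiff, Nat.card_eq_fintype_card]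
  have hne : H' ≠ ⊤ := fun h => by simpa [H'] using congrArg (a ∈ ·.verts) h
  have := hbal.ncard_edgeSet_mul_lt hne (Subgraph.two_le_ncard_verts (hedge ▸ hE))
  rw [hedge, hverts] at this
  exact this.not_ge (Nat.mul_le_mul_left _ (by omega))

end StrictlyBalanced

section Copies

variable {v n : ℕ} (H : SimpleGraph (Fin v)) [DecidableRel H.Adj]

def copyOf (φ : Fin v ↪ Fin n) : Finset (Sym2 (Fin n)) :=
  H.edgeFinset.image (Sym2.map φ)

theorem copyEdgeSets_eq_image (x₀ : Fin n) :
    copyEdgeSets v n H x₀ = ({φ : Fin v ↪ Fin n | ∃ a, φ a = x₀} : Finset _).image (copyOf H) := by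
  ext U
  simp [copyEdgeSets, copyOf, eq_comm]

variable {H}

theorem range_subset_of_copyOf_subset (hiso : ∀ a, ∃ b, H.Adj a b) {φ ψ : Fin v ↪ Fin n}
    (h : copyOf H ψ ⊆ copyOf H φ) : Set.range ψ ⊆ Set.range φ := by
  rintro _ ⟨a, rfl⟩
  obtain ⟨b, hab⟩ := hiso a
  have hedge : s(a, b) ∈ H.edgeFinset := mem_edgeFinset.2 (H.mem_edgeSet.2 hab)
  obtain ⟨e, -, he⟩ := mem_image.1 (h (mem_image_of_mem _ hedge))
  have : ψ a ∈ Sym2.map φ e := he ▸ Sym2.mem_map.2 ⟨a, Sym2.mem_mk_left _ _, rfl⟩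
  obtain ⟨c, -, hc⟩ := Sym2.mem_map.1 this
  exact ⟨c, hc⟩

theorem vertSpan_subset_range {x₀ : Fin n} {L : Finset (Sym2 (Fin n))} {φ : Fin v ↪ Fin n}
    (hx : ∃ a, φ a = x₀) (hL : L ⊆ copyOf H φ) : vertSpan L x₀ ⊆ Set.range φ := by
  rintro x (rfl | ⟨e, he, hxe⟩)
  · exact hx
  · obtain ⟨e', -, rfl⟩ := mem_image.1 (hL he)
    obtain ⟨a, -, rfl⟩ := Sym2.mem_map.1 hxe
    exact ⟨a, rfl⟩

variable (H)

theorem ncard_copyEdgeSets_superset_le (x₀ : Fin n) (L : Finset (Sym2 (Fin n))) :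
    {U ∈ copyEdgeSets v n H x₀ | L ⊆ U}.ncard ≤
      v ^ (vertSpan L x₀).ncard * n ^ (v - (vertSpan L x₀).ncard) := by
  set S := (Set.toFinite (vertSpan L x₀)).toFinset
  have hsub : {U ∈ copyEdgeSets v n H x₀ | L ⊆ U} ⊆
      ↑(({φ : Fin v ↪ Fin n | ∀ b ∈ S, ∃ a, φ a = b} : Finset _).image (copyOf H)) := by
    rintro U ⟨hU, hLU⟩
    rw [copyEdgeSets_eq_image, coe_image] at hU
    obtain ⟨φ, hφ, rfl⟩ := hU
    refine mem_coe.2 (mem_image_of_mem _ (mem_filter.2 ⟨mem_univ _, fun b hb => ?_⟩))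
    exact vertSpan_subset_range (by simpa using hφ) hLU ((Set.Finite.mem_toFinset _).1 hb)
  calc {U ∈ copyEdgeSets v n H x₀ | L ⊆ U}.ncard
      ≤ #({φ : Fin v ↪ Fin n | ∀ b ∈ S, ∃ a, φ a = b} : Finset _) :=
        (Set.ncard_le_ncard hsub (finite_toSet _)).trans
          ((Set.ncard_coe_finset _).trans_le card_image_le)
    _ ≤ v ^ #S * n ^ (v - #S) := by
        convert card_embedding_surjOn_le (α := Fin v) (β := Fin n) S <;> simp
    _ = v ^ (vertSpan L x₀).ncard * n ^ (v - (vertSpan L x₀).ncard) := by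
        rw [Set.ncard_eq_toFinset_card _ (Set.toFinite _)]

theorem ncard_copyEdgeSets_le (x₀ : Fin n) :
    (copyEdgeSets v n H x₀).ncard ≤ v * n ^ (v - 1) := by
  simpa [vertSpan] using ncard_copyEdgeSets_superset_le H x₀ ∅

theorem pow_le_mul_ncard_copyEdgeSets (hv : 1 ≤ v) (hiso : ∀ a, ∃ b, H.Adj a b) (x₀ : Fin n) :
    (n + 1 - v) ^ (v - 1) ≤ v ^ v * (copyEdgeSets v n H x₀).ncard := by
  obtain ⟨k, rfl⟩ : ∃ k, v = k + 1 := ⟨v - 1, by omega⟩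
  set T : Finset (Fin (k + 1) ↪ Fin n) := {φ | φ 0 = x₀}
  -- Without isolated vertices, embeddings giving the same copy have the same range.
  have hfiber : ∀ U ∈ T.image (copyOf H), #{φ ∈ T | copyOf H φ = U} ≤ (k + 1) ^ (k + 1) := by
    rintro U hU
    obtain ⟨φ₀, -, rfl⟩ := mem_image.1 hU
    calc #{φ ∈ T | copyOf H φ = copyOf H φ₀}
        ≤ #({ψ : Fin (k + 1) ↪ Fin n | ∀ b ∈ univ.map φ₀, ∃ a, ψ a = b} : Finset _) := by
          refine card_le_card fun ψ hψ => mem_filter.2 ⟨mem_univ _, fun b hb => ?_⟩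
          obtain ⟨a, -, rfl⟩ := mem_map.1 hb
          exact range_subset_of_copyOf_subset hiso (mem_filter.1 hψ).2.ge ⟨a, rfl⟩
      _ ≤ (k + 1) ^ (k + 1) := by
          simpa using card_embedding_surjOn_le (α := Fin (k + 1)) (β := Fin n) (univ.map φ₀)
  have himage : ↑(T.image (copyOf H)) ⊆ copyEdgeSets _ n H x₀ := by
    rw [copyEdgeSets_eq_image]
    refine coe_subset.2 (image_subset_image fun φ hφ => ?_)
    exact mem_filter.2 ⟨mem_univ _, 0, (mem_filter.1 hφ).2⟩
  calc (n + 1 - (k + 1)) ^ (k + 1 - 1) ≤ (n - 1).descFactorial k := by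
        simpa [show n - 1 + 1 - k = n + 1 - (k + 1) by have := x₀.pos; omega] using
          Nat.pow_sub_le_descFactorial (n - 1) k
    _ ≤ #T := by simpa using descFactorial_le_card_embedding_zero_eq (k := k) x₀
    _ ≤ (k + 1) ^ (k + 1) * #(T.image (copyOf H)) := card_le_mul_card_image T _ hfiber
    _ ≤ (k + 1) ^ (k + 1) * (copyEdgeSets _ n H x₀).ncard := by
        rw [← Set.ncard_coe_finset]
        exact Nat.mul_le_mul_left _ (Set.ncard_le_ncard himage (Set.toFinite _))

end Copies

section Span

variable {v n : ℕ} {H : SimpleGraph (Fin v)} [DecidableRel H.Adj] {x₀ : Fin n}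
  {L : Finset (Sym2 (Fin n))} {φ : Fin v ↪ Fin n}

theorem ncard_vertSpan_le (hx : ∃ a, φ a = x₀) (hL : L ⊆ copyOf H φ) :
    (vertSpan L x₀).ncard ≤ v := by
  simpa [Set.ncard_range_of_injective φ.injective] using
    Set.ncard_le_ncard (vertSpan_subset_range hx hL)

theorem StrictlyBalanced.card_mul_lt_of_subset_copyOf (hbal : StrictlyBalanced H)
    (hL : L.Nonempty) (hLm : #L < #H.edgeFinset) (hx : ∃ a, φ a = x₀) (hsub : L ⊆ copyOf H φ) :
    #L * (v - 1) < #H.edgeFinset * ((vertSpan L x₀).ncard - 1) := by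
  let H' : H.Subgraph :=
    { verts := φ ⁻¹' vertSpan L x₀
      Adj a b := H.Adj a b ∧ s(φ a, φ b) ∈ L
      adj_sub h := h.1
      edge_vert h := Or.inr ⟨_, h.2, Sym2.mem_mk_left _ _⟩
      symm := ⟨fun a b h => ⟨h.1.symm, Sym2.eq_swap ▸ h.2⟩⟩ }
  have himage : Sym2.map φ '' H'.edgeSet = L := by
    ext l
    constructor
    · rintro ⟨e, he, rfl⟩
      induction e using Sym2.ind with
      | _ a b => exact he.2
    · intro hl
      obtain ⟨e, he, rfl⟩ := mem_image.1 (hsub hl)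
      refine ⟨e, ?_, rfl⟩
      induction e using Sym2.ind with
      | _ a b => exact ⟨H.mem_edgeSet.1 (mem_edgeFinset.1 he), hl⟩
  have hedges : H'.edgeSet.ncard = #L := by
    rw [← Set.ncard_coe_finset, ← himage,
      Set.ncard_image_of_injective _ (Sym2.map.injective φ.injective)]
  have hverts : H'.verts.ncard = (vertSpan L x₀).ncard := by
    rw [← Set.ncard_image_of_injective _ φ.injective,
      Set.image_preimage_eq_of_subset (vertSpan_subset_range hx hsub)]
  have hne : H' ≠ ⊤ := fun h => by
    rw [h, Subgraph.edgeSet_top, ← coe_edgeFinset, Set.ncard_coe_finset] at hedges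
    omega
  have hE : H'.edgeSet.Nonempty := by
    rw [← Set.image_nonempty (f := Sym2.map φ), himage]
    exact coe_nonempty.2 hL
  have := hbal.ncard_edgeSet_mul_lt hne (Subgraph.two_le_ncard_verts hE)
  rwa [hedges, hverts, Fintype.card_fin, ← coe_edgeFinset, Set.ncard_coe_finset] at this

end Span

section Expectations

variable {v n m : ℕ} (H : SimpleGraph (Fin v)) [DecidableRel H.Adj] (x₀ : Fin n) {p : ℝ}

theorem Ef_le (hp : 0 ≤ p) : Ef v n H x₀ m p ≤ v * n ^ (v - 1) * p ^ m := by
  unfold Ef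
  gcongr
  exact_mod_cast ncard_copyEdgeSets_le H x₀

theorem pow_mul_pow_le_Ef (hv : 1 ≤ v) (hiso : ∀ a, ∃ b, H.Adj a b) (hn : 2 * v ≤ n)
    (hp : 0 ≤ p) : (n : ℝ) ^ (v - 1) * p ^ m ≤ 2 ^ (v - 1) * v ^ v * Ef v n H x₀ m p := by
  have hcount : n ^ (v - 1) ≤ 2 ^ (v - 1) * v ^ v * (copyEdgeSets v n H x₀).ncard :=
    calc n ^ (v - 1) ≤ (2 * (n + 1 - v)) ^ (v - 1) := Nat.pow_le_pow_left (by omega) _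
      _ = 2 ^ (v - 1) * (n + 1 - v) ^ (v - 1) := mul_pow _ _ _
      _ ≤ 2 ^ (v - 1) * v ^ v * (copyEdgeSets v n H x₀).ncard := by
        rw [mul_assoc]
        exact Nat.mul_le_mul_left _ (pow_le_mul_ncard_copyEdgeSets H hv hiso x₀)
  unfold Ef
  rw [← mul_assoc]
  gcongr
  exact_mod_cast hcount

theorem pow_mul_pow_mul_ELf_le (hv : 1 ≤ v) (hiso : ∀ a, ∃ b, H.Adj a b) (hn : 2 * v ≤ n)
    (hp : 0 ≤ p) {L : Finset (Sym2 (Fin n))} (hLm : #L ≤ m) (hs : (vertSpan L x₀).ncard ≤ v) :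
    (n : ℝ) ^ ((vertSpan L x₀).ncard - 1) * p ^ #L * ELf v n H x₀ m p L ≤
      2 ^ (v - 1) * v ^ v * v ^ v * Ef v n H x₀ m p := by
  set s := (vertSpan L x₀).ncard
  have hs1 : 1 ≤ s := (Set.ncard_pos).2 ⟨x₀, Or.inl rfl⟩
  have hcount : n ^ (s - 1) * {U ∈ copyEdgeSets v n H x₀ | L ⊆ U}.ncard ≤ v ^ v * n ^ (v - 1) :=
    calc n ^ (s - 1) * {U ∈ copyEdgeSets v n H x₀ | L ⊆ U}.ncard
        ≤ n ^ (s - 1) * (v ^ s * n ^ (v - s)) :=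
          Nat.mul_le_mul_left _ (ncard_copyEdgeSets_superset_le H x₀ L)
      _ = v ^ s * n ^ (v - 1) := by
          rw [mul_left_comm, ← pow_add, show s - 1 + (v - s) = v - 1 by omega]
      _ ≤ v ^ v * n ^ (v - 1) := Nat.mul_le_mul_right _ (Nat.pow_le_pow_right (by omega) hs)
  calc (n : ℝ) ^ (s - 1) * p ^ #L * ELf v n H x₀ m p L
      = (n ^ (s - 1) * {U ∈ copyEdgeSets v n H x₀ | L ⊆ U}.ncard : ℕ) * p ^ m := by
        rw [ELf, ← pow_mul_pow_sub p hLm]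
        push_cast
        ring
    _ ≤ v ^ v * (n ^ (v - 1) * p ^ m) := by
        rw [← mul_assoc]
        gcongr
        exact_mod_cast hcount
    _ ≤ v ^ v * (2 ^ (v - 1) * v ^ v * Ef v n H x₀ m p) := by
        exact mul_le_mul_of_nonneg_left (pow_mul_pow_le_Ef H x₀ hv hiso hn hp) (by positivity)
    _ = 2 ^ (v - 1) * v ^ v * v ^ v * Ef v n H x₀ m p := by ring

end Expectations

theorem rpow_one_div_le_pow_mul_pow {x p : ℝ} {a k m v : ℕ} (hx : 1 ≤ x) (hv : 1 ≤ v)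
    (hp : x ^ (-(((v : ℝ) - 1) / m)) ≤ p) (h : a * (v - 1) < m * k) :
    x ^ (1 / m : ℝ) ≤ x ^ k * p ^ a := by
  have hm : (0 : ℝ) < m := by exact_mod_cast Nat.pos_of_ne_zero (by rintro rfl; simp at h)
  have hgap : (a : ℝ) * ((v : ℝ) - 1) + 1 ≤ m * k := by
    rw [← Nat.cast_pred hv]
    exact_mod_cast h
  calc x ^ (1 / m : ℝ) ≤ x ^ ((k : ℝ) + -(((v : ℝ) - 1) / m) * a) := by
        refine Real.rpow_le_rpow_of_exponent_le hx ?_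
        rw [div_le_iff₀ hm] at *
        field_simp
        linarith
    _ = x ^ k * (x ^ (-(((v : ℝ) - 1) / m))) ^ a := by
        rw [Real.rpow_add (by linarith), Real.rpow_mul (by linarith), Real.rpow_natCast,
          Real.rpow_natCast]
    _ ≤ x ^ k * p ^ a := by gcongr

/-- For strictly balanced `H` with `v` vertices and `m` edges and `x₀ ∈ [n]`:
`E f = Θ(n^{v−1} p^m)`; for nonempty `L` with `m' = |L| < m` edges which together with
`x₀` span `v'` vertices and which fit inside some copy of `H` through `x₀`,
`E f / E_L f = Ω(n^{v'−1} p^{m'})`; and if `p ≥ n^{−(v−1)/m}` then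
`E f / E_L f ≥ n^{Ω(1)}`. -/
theorem stmt16 {v : ℕ} (hv : 2 ≤ v) (H : SimpleGraph (Fin v)) [DecidableRel H.Adj]
    (hbal : StrictlyBalanced H) (m : ℕ) (hm : m = H.edgeFinset.card) (hm1 : 1 ≤ m) :
    ∃ c₁ c₂ c₃ c₄ : ℝ, 0 < c₁ ∧ 0 < c₂ ∧ 0 < c₃ ∧ 0 < c₄ ∧
      ∀ᶠ n : ℕ in Filter.atTop, ∀ x₀ : Fin n, ∀ p : ℝ, 0 < p → p ≤ 1 →
        (c₁ * (n : ℝ) ^ (v - 1) * p ^ m ≤ Ef v n H x₀ m p ∧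
          Ef v n H x₀ m p ≤ c₂ * (n : ℝ) ^ (v - 1) * p ^ m) ∧
        ∀ L : Finset (Sym2 (Fin n)), L.Nonempty → L.card < m →
          (∃ U ∈ copyEdgeSets v n H x₀, L ⊆ U) →
          c₃ * (n : ℝ) ^ ((vertSpan L x₀).ncard - 1) * p ^ L.card *
              ELf v n H x₀ m p L ≤ Ef v n H x₀ m p ∧
            ((n : ℝ) ^ (-(((v : ℝ) - 1) / (m : ℝ))) ≤ p →
              (n : ℝ) ^ c₄ * ELf v n H x₀ m p L ≤ Ef v n H x₀ m p) := by
  have hiso := hbal.exists_adj (by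
    rw [← coe_edgeFinset, coe_nonempty, ← card_pos]
    omega)
  set C : ℝ := 2 ^ (v - 1) * v ^ v * v ^ v
  have hC : 0 < C := by positivity
  refine ⟨(2 ^ (v - 1) * v ^ v)⁻¹, v, C⁻¹, 1 / (2 * m), by positivity, by positivity,
    by positivity, by positivity, ?_⟩
  filter_upwards [Filter.eventually_ge_atTop (2 * v),
    ((tendsto_rpow_atTop (by positivity : (0 : ℝ) < 1 / (2 * m))).comp
      tendsto_natCast_atTop_atTop).eventually_ge_atTop C]
    with n hn hnC x₀ p hp _
  refine ⟨⟨?_, Ef_le H x₀ hp.le⟩, fun L hL hLm ⟨U, hU, hLU⟩ => ?_⟩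
  · rw [mul_assoc, inv_mul_le_iff₀ (by positivity)]
    exact pow_mul_pow_le_Ef H x₀ (by omega) hiso hn hp.le
  obtain ⟨φ, hx, rfl⟩ := hU
  set s := (vertSpan L x₀).ncard
  have hfirst : C⁻¹ * (n : ℝ) ^ (s - 1) * p ^ #L * ELf v n H x₀ m p L ≤ Ef v n H x₀ m p := by
    rw [mul_assoc, mul_assoc, inv_mul_le_iff₀ hC, ← mul_assoc]
    exact pow_mul_pow_mul_ELf_le H x₀ (by omega) hiso hn hp.le hLm.le (ncard_vertSpan_le hx hLU)
  refine ⟨hfirst, fun hpn => le_trans ?_ hfirst⟩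
  have hdens : #L * (v - 1) < m * (s - 1) :=
    hm ▸ hbal.card_mul_lt_of_subset_copyOf hL (hm ▸ hLm) hx hLU
  have hn1 : (1 : ℝ) ≤ n := by exact_mod_cast (by omega : 1 ≤ n)
  have hrate : (n : ℝ) ^ (1 / (2 * m) : ℝ) ≤ C⁻¹ * ((n : ℝ) ^ (s - 1) * p ^ #L) := by
    rw [le_inv_mul_iff₀ hC]
    calc C * (n : ℝ) ^ (1 / (2 * m) : ℝ)
        ≤ (n : ℝ) ^ (1 / (2 * m) : ℝ) * (n : ℝ) ^ (1 / (2 * m) : ℝ) := by gcongr; exact hnC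
      _ = (n : ℝ) ^ (1 / m : ℝ) := by rw [← Real.rpow_add (by linarith)]; ring_nf
      _ ≤ (n : ℝ) ^ (s - 1) * p ^ #L := rpow_one_div_le_pow_mul_pow hn1 (by omega) hpn hdens
  have hELf : 0 ≤ ELf v n H x₀ m p L := mul_nonneg (Nat.cast_nonneg _) (pow_nonneg hp.le _)
  exact (mul_le_mul_of_nonneg_right hrate hELf).trans_eq (by ring)
end
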